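/- arXiv:2509.18784 — 7 statements merged into one kernel-verified Lean document; each statement's English description precedes it below -/
import Mathlib

section
/- For every n ≥ 5, the monophonic number of the Kneser graph K(n,2) equals 3. -/
open SimpleGraph

variable {V : Type*}

/-- A walk is an induced path if it is a path and every edge of the graph between
vertices of the walk is an edge of the walk. -/
def IsInducedPath (G : SimpleGraph V) {u v : V} (p : G.Walk u v) : Prop :=
  p.IsPath ∧ ∀ a b : V, a ∈ p.support → b ∈ p.support → G.Adj a b → p.toSubgraph.Adj a b

/-- The monophonic interval: all vertices lying on some induced `u,v`-path. -/
def monoInterval (G : SimpleGraph V) (u v : V) : Set V :=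
  {w | ∃ p : G.Walk u v, IsInducedPath G p ∧ w ∈ p.support}

/-- A set `S` is monophonic if every vertex lies in the monophonic interval
of some pair of vertices of `S`. -/
def IsMonophonicSet (G : SimpleGraph V) (S : Set V) : Prop :=
  ∀ w : V, ∃ x ∈ S, ∃ y ∈ S, w ∈ monoInterval G x y

/-- The monophonic number: least cardinality of a monophonic set. -/
noncomputable def monophonicNumber (G : SimpleGraph V) : ℕ :=
  sInf {n : ℕ | ∃ S : Finset V, S.card = n ∧ IsMonophonicSet G (S : Set V)}

/-- A graph is strongly 2-monophonic if every pair of non-adjacent vertices is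
a monophonic set. -/
def Strongly2Monophonic (G : SimpleGraph V) : Prop :=
  ∀ x y : V, x ≠ y → ¬ G.Adj x y → IsMonophonicSet G {x, y}

/-- A closed walk is an induced cycle if it is a cycle and every edge of the graph
between vertices of the walk is an edge of the walk. -/
def IsInducedCycle (G : SimpleGraph V) {a : V} (w : G.Walk a a) : Prop :=
  w.IsCycle ∧ ∀ u v : V, u ∈ w.support → v ∈ w.support → G.Adj u v → w.toSubgraph.Adj u v

/-- The Kneser graph `K(n,r)`: vertices are `r`-subsets of `[n]`, adjacent iff disjoint. -/
def kneser (n r : ℕ) : SimpleGraph {s : Finset (Fin n) // s.card = r} where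
  Adj a b := a ≠ b ∧ Disjoint a.1 b.1
  symm := ⟨fun _ _ h => ⟨h.1.symm, h.2.symm⟩⟩
  loopless := ⟨fun _ h => h.1 rfl⟩

/-- The Johnson graph `J(n,r)`: vertices are `r`-subsets of `[n]`, adjacent iff the
intersection has `r-1` elements. -/
def johnson (n r : ℕ) : SimpleGraph {s : Finset (Fin n) // s.card = r} where
  Adj a b := a ≠ b ∧ (a.1 ∩ b.1).card = r - 1
  symm := ⟨fun _ _ h => ⟨h.1.symm, by rw [Finset.inter_comm]; exact h.2⟩⟩
  loopless := ⟨fun _ h => h.1 rfl⟩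

/-! The pairs `{a, b}`, `{a, c}`, `{b, c}` form a monophonic set: a pair `w` avoiding `a, b, c`
lies on the induced path `{a, b} – w – {a, c}`, and a pair meeting `{a, b, c}` only in `a` lies on
`{a, b} – {c, δ} – w – {b, c}` for any `δ ∉ w ∪ {b, c}`, which exists as `n ≥ 5`.

Two vertices `x`, `y` never suffice. If `x = y` or `x ~ y`, an induced `x,y`-path has no inner
vertex. Otherwise `x = {α, β}`, `y = {α, γ}`, and `w = {β, γ}` lies on no induced `x,y`-path: an
inner vertex `w` splits such a path into two sides with no edges between them, so in the Kneser
graph any two vertices on opposite sides intersect. Applied to the path neighbours `c` of `x`,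
`a` and `b` of `w`, and `e` of `y`, this forces `c = {γ, t}`, `e = {β, t}` and then
`a = b = {α, t}`, contradicting that the path is simple. -/

theorem Finset.eq_pair_of_card_eq_two {α : Type*} [DecidableEq α] {s : Finset α} {a b : α}
    (hs : s.card = 2) (ha : a ∈ s) (hb : b ∈ s) (hab : a ≠ b) : s = {a, b} :=
  (Finset.eq_of_subset_of_card_le (by simp [Finset.insert_subset_iff, ha, hb])
    (by rw [hs, Finset.card_pair hab])).symm

theorem Finset.exists_eq_pair_of_card_eq_two {α : Type*} [DecidableEq α] {s : Finset α} {a : α}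
    (hs : s.card = 2) (ha : a ∈ s) : ∃ b, a ≠ b ∧ s = {a, b} := by
  obtain ⟨b, hb⟩ := Finset.card_eq_one.mp (by rw [Finset.card_erase_of_mem ha, hs])
  exact ⟨b, (Finset.ne_of_mem_erase (hb ▸ Finset.mem_singleton_self b)).symm,
    by rw [← Finset.insert_erase ha, hb]⟩

theorem Finset.exists_subset_pair_of_card_le_two {α : Type*} [DecidableEq α] [Nonempty α]
    {s : Finset α} (hs : s.card ≤ 2) : ∃ a b, s ⊆ {a, b} := by
  interval_cases h : s.card
  · obtain ⟨a⟩ := ‹Nonempty α›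
    exact ⟨a, a, by simp [Finset.card_eq_zero.mp h]⟩
  · obtain ⟨a, rfl⟩ := Finset.card_eq_one.mp h
    exact ⟨a, a, by simp⟩
  · obtain ⟨a, b, -, rfl⟩ := Finset.card_eq_two.mp h
    exact ⟨a, b, subset_rfl⟩

namespace IsInducedPath

variable {G : SimpleGraph V} {x y w u v : V}

theorem adj_mem_edges {p : G.Walk x y} (hp : IsInducedPath G p) (hu : u ∈ p.support)
    (hv : v ∈ p.support) (huv : G.Adj u v) : s(u, v) ∈ p.edges :=
  Walk.adj_toSubgraph_iff_mem_edges.mp (hp.2 u v hu hv huv)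

theorem ne_and_not_adj_of_append {q : G.Walk x w} {r : G.Walk w y}
    (hp : IsInducedPath G (q.append r)) (hu : u ∈ q.support) (hv : v ∈ r.support)
    (huw : u ≠ w) (hvw : v ≠ w) : u ≠ v ∧ ¬ G.Adj u v := by
  have eq_of_mem : ∀ z ∈ q.support, z ∈ r.support → z = w := by
    intro z hzq hzr
    by_contra hzw
    have hnd := hp.1.support_nodup
    rw [Walk.support_append] at hnd
    refine List.disjoint_of_nodup_append hnd hzq ?_
    rw [← r.cons_tail_support] at hzr
    exact (List.mem_cons.mp hzr).resolve_left hzw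
  refine ⟨fun huv => hvw (eq_of_mem v (huv ▸ hu) hv), fun huv => ?_⟩
  have he := hp.adj_mem_edges (by simp [hu]) (by simp [hv]) huv
  rcases List.mem_append.mp (Walk.edges_append q r ▸ he) with he | he
  · exact hvw (eq_of_mem v (q.snd_mem_support_of_mem_edges he) hv)
  · exact huw (eq_of_mem u hu (r.fst_mem_support_of_mem_edges he))

end IsInducedPath

section monoInterval

variable {G : SimpleGraph V} {x y z w m : V}

theorem IsMonophonicSet.mono {S T : Set V} (hS : IsMonophonicSet G S) (hST : S ⊆ T) :
    IsMonophonicSet G T := fun w =>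
  let ⟨a, ha, b, hb, hw⟩ := hS w
  ⟨a, hST ha, b, hST hb, hw⟩

theorem mem_monoInterval_self (x : V) : x ∈ monoInterval G x x :=
  ⟨.nil, ⟨.nil, by simp⟩, by simp⟩

theorem monoInterval_comm (x y : V) : monoInterval G x y = monoInterval G y x := by
  suffices ∀ x y : V, monoInterval G x y ⊆ monoInterval G y x from
    (this x y).antisymm (this y x)
  rintro x y w ⟨p, ⟨hp, hind⟩, hw⟩
  refine ⟨p.reverse, ⟨hp.reverse, ?_⟩, by simpa using hw⟩
  intro a b ha hb hab
  simpa using hind a b (by simpa using ha) (by simpa using hb) hab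

theorem mem_monoInterval_of_adj_adj (h1 : G.Adj x m) (h2 : G.Adj m y) (hxy : x ≠ y)
    (nxy : ¬ G.Adj x y) : m ∈ monoInterval G x y := by
  refine ⟨.cons h1 (.cons h2 .nil), ⟨by simp [Walk.cons_isPath_iff, h1.ne, h2.ne, hxy],
    fun a b ha hb hab => ?_⟩, by simp⟩
  simp only [Walk.support_cons, Walk.support_nil, List.mem_cons, List.not_mem_nil,
    or_false] at ha hb
  rw [Walk.adj_toSubgraph_iff_mem_edges]
  rcases ha with rfl | rfl | rfl <;> rcases hb with rfl | rfl | rfl <;> simp_all [G.adj_comm]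

theorem mem_monoInterval_of_adj_adj_adj (h1 : G.Adj x z) (h2 : G.Adj z m) (h3 : G.Adj m y)
    (hxm : x ≠ m) (hxy : x ≠ y) (hzy : z ≠ y)
    (nxm : ¬ G.Adj x m) (nxy : ¬ G.Adj x y) (nzy : ¬ G.Adj z y) : m ∈ monoInterval G x y := by
  refine ⟨.cons h1 (.cons h2 (.cons h3 .nil)),
    ⟨by simp [Walk.cons_isPath_iff, h1.ne, h2.ne, h3.ne, hxm, hxy, hzy],
    fun a b ha hb hab => ?_⟩, by simp⟩
  simp only [Walk.support_cons, Walk.support_nil, List.mem_cons, List.not_mem_nil,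
    or_false] at ha hb
  rw [Walk.adj_toSubgraph_iff_mem_edges]
  rcases ha with rfl | rfl | rfl | rfl <;> rcases hb with rfl | rfl | rfl | rfl <;>
    simp_all [G.adj_comm]

theorem exists_sides_of_mem_monoInterval (hw : w ∈ monoInterval G x y) (hwx : w ≠ x)
    (hwy : w ≠ y) :
    ∃ A B : Set V, x ∈ A ∧ y ∈ B ∧ (∀ u ∈ A, ∀ v ∈ B, u ≠ v ∧ ¬ G.Adj u v) ∧
      (∃ c ∈ insert w A, G.Adj x c) ∧ (∃ a ∈ A, G.Adj a w) ∧
      (∃ b ∈ B, G.Adj w b) ∧ (∃ e ∈ insert w B, G.Adj e y) := by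
  obtain ⟨p, hp, hwp⟩ := hw
  obtain ⟨q, r, rfl⟩ := Walk.mem_support_iff_exists_append.mp hwp
  have hq : ¬ q.Nil := Walk.not_nil_of_ne hwx.symm
  have hr : ¬ r.Nil := Walk.not_nil_of_ne hwy
  refine ⟨{u | u ∈ q.support ∧ u ≠ w}, {v | v ∈ r.support ∧ v ≠ w},
    ⟨q.start_mem_support, hwx.symm⟩, ⟨r.end_mem_support, hwy.symm⟩,
    fun u hu v hv => hp.ne_and_not_adj_of_append hu.1 hv.1 hu.2 hv.2,
    ⟨q.snd, or_iff_not_imp_left.mpr fun h => ⟨q.getVert_mem_support _, h⟩, q.adj_snd hq⟩,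
    ⟨q.penultimate, ⟨q.getVert_mem_support _, (q.adj_penultimate hq).ne⟩, q.adj_penultimate hq⟩,
    ⟨r.snd, ⟨r.getVert_mem_support _, (r.adj_snd hr).ne'⟩, r.adj_snd hr⟩,
    ⟨r.penultimate, or_iff_not_imp_left.mpr fun h => ⟨r.getVert_mem_support _, h⟩,
      r.adj_penultimate hr⟩⟩

theorem ne_and_not_adj_of_mem_monoInterval (hw : w ∈ monoInterval G x y) (hwx : w ≠ x)
    (hwy : w ≠ y) : x ≠ y ∧ ¬ G.Adj x y :=
  let ⟨_, _, hx, hy, hAB, _⟩ := exists_sides_of_mem_monoInterval hw hwx hwy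
  hAB x hx y hy

theorem mem_monoInterval_of_isMonophonicSet_pair (h : IsMonophonicSet G {x, y}) (w : V) :
    w = x ∨ w = y ∨ w ∈ monoInterval G x y := by
  by_contra! hw
  obtain ⟨a, ha, b, hb, hab⟩ := h w
  have hne := ne_and_not_adj_of_mem_monoInterval hab
  simp only [Set.mem_insert_iff, Set.mem_singleton_iff] at ha hb
  rcases ha with rfl | rfl <;> rcases hb with rfl | rfl
  · exact (hne hw.1 hw.1).1 rfl
  · exact hw.2.2 hab
  · exact hw.2.2 (monoInterval_comm a b ▸ hab)
  · exact (hne hw.2.1 hw.2.1).1 rfl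

end monoInterval

theorem Subtype.ne_of_mem_of_notMem {α : Type*} {p : Finset α → Prop} {u v : Subtype p} {t : α}
    (hu : t ∈ u.1) (hv : t ∉ v.1) : u ≠ v :=
  fun h => hv (h ▸ hu)

section Kneser

variable {n r : ℕ}

theorem kneser_adj_iff (hr : 0 < r) {u v : {s : Finset (Fin n) // s.card = r}} :
    (kneser n r).Adj u v ↔ Disjoint u.1 v.1 := by
  refine ⟨And.right, fun h => ⟨?_, h⟩⟩
  rintro rfl
  have hu := u.2
  rw [disjoint_self.mp h, Finset.bot_eq_empty, Finset.card_empty] at hu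
  omega

def kneserPair {a b : Fin n} (h : a ≠ b) : {s : Finset (Fin n) // s.card = 2} :=
  ⟨{a, b}, Finset.card_pair h⟩

@[simp]
theorem kneserPair_val {a b : Fin n} (h : a ≠ b) : (kneserPair h).1 = {a, b} := rfl

theorem kneserPair_comm {a b : Fin n} (h : a ≠ b) : kneserPair h = kneserPair h.symm :=
  Subtype.ext (Finset.pair_comm a b)

theorem kneserPair_notMem_monoInterval {α β γ : Fin n} (hαβ : α ≠ β) (hαγ : α ≠ γ)
    (hβγ : β ≠ γ) :
    kneserPair hβγ ∉ monoInterval (kneser n 2) (kneserPair hαβ) (kneserPair hαγ) := by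
  intro hw
  have adj {u v} : (kneser n 2).Adj u v ↔ Disjoint u.1 v.1 := kneser_adj_iff two_pos
  obtain ⟨A, B, hxA, hyB, hAB, ⟨c, hcA, hxc⟩, ⟨a, haA, haw⟩, ⟨b, hbB, hwb⟩, ⟨e, heB, hey⟩⟩ :=
    exists_sides_of_mem_monoInterval hw
      (Subtype.ne_of_mem_of_notMem (t := γ) (by simp) (by simp [hαγ.symm, hβγ.symm]))
      (Subtype.ne_of_mem_of_notMem (t := β) (by simp) (by simp [hαβ.symm, hβγ]))
  have cross {u v} (hu : u ∈ A) (hv : v ∈ B) : ¬ Disjoint u.1 v.1 := mt adj.2 (hAB u hu v hv).2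
  simp only [adj, kneserPair_val, Finset.disjoint_insert_left, Finset.disjoint_insert_right,
    Finset.disjoint_singleton_left, Finset.disjoint_singleton_right] at hxc haw hwb hey
  replace hcA : c ∈ A :=
    hcA.resolve_left (Subtype.ne_of_mem_of_notMem (t := β) (by simp) hxc.2).symm
  replace heB : e ∈ B :=
    heB.resolve_left (Subtype.ne_of_mem_of_notMem (t := γ) (by simp) hey.2).symm
  have hγc : γ ∈ c.1 := by simpa [hxc.1] using cross hcA hyB
  have hαa : α ∈ a.1 := by simpa [haw.2] using cross haA hyB
  have hαb : α ∈ b.1 := by simpa [hwb.1] using cross hxA hbB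
  have hβe : β ∈ e.1 := by simpa [hey.1] using cross hxA heB
  obtain ⟨t, htc, hte⟩ := Finset.not_disjoint_iff.mp (cross hcA heB)
  have hc : c.1 = {γ, t} :=
    Finset.eq_pair_of_card_eq_two c.2 hγc htc (by rintro rfl; exact hey.2 hte)
  have he : e.1 = {β, t} :=
    Finset.eq_pair_of_card_eq_two e.2 hβe hte (by rintro rfl; exact hxc.2 htc)
  have htb : t ∈ b.1 := by simpa [hc, Finset.disjoint_insert_left, hwb.2] using cross hcA hbB
  have hta : t ∈ a.1 := by simpa [he, Finset.disjoint_insert_right, haw.1] using cross haA heB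
  have hαt : α ≠ t := by rintro rfl; exact hxc.1 htc
  refine (hAB a haA b hbB).1 (Subtype.ext ?_)
  rw [Finset.eq_pair_of_card_eq_two a.2 hαa hta hαt, Finset.eq_pair_of_card_eq_two b.2 hαb htb hαt]

theorem kneser_mem_monoInterval_of_mem (hn : 5 ≤ n) {a b c : Fin n} (hab : a ≠ b) (hbc : b ≠ c)
    {w : {s : Finset (Fin n) // s.card = 2}} (ha : a ∈ w.1) (hb : b ∉ w.1) (hc : c ∉ w.1) :
    w ∈ monoInterval (kneser n 2) (kneserPair hab) (kneserPair hbc) := by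
  obtain ⟨δ, -, hδ⟩ := Finset.exists_mem_notMem_of_card_lt_card (s := w.1 ∪ {b, c})
    (t := Finset.univ) (by
      have := (Finset.card_union_le w.1 {b, c}).trans (add_le_add_right Finset.card_le_two _)
      simp only [w.2, Finset.card_univ, Fintype.card_fin] at this ⊢
      omega)
  simp only [Finset.mem_union, Finset.mem_insert, Finset.mem_singleton, not_or] at hδ
  obtain ⟨hδw, hδb, hδc⟩ := hδ
  have haδ : a ≠ δ := fun h => hδw (h ▸ ha)
  have hac : a ≠ c := fun h => hc (h ▸ ha)
  have adj {u v} : (kneser n 2).Adj u v ↔ Disjoint u.1 v.1 := kneser_adj_iff two_pos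
  apply mem_monoInterval_of_adj_adj_adj (z := kneserPair (Ne.symm hδc))
  · exact adj.2 (by simp [Finset.disjoint_left, hac, haδ, hbc, Ne.symm hδb])
  · exact adj.2 (by simp [Finset.disjoint_insert_left, hc, hδw])
  · exact adj.2 (by simp [Finset.disjoint_insert_right, hb, hc])
  · exact Subtype.ne_of_mem_of_notMem (t := b) (by simp) hb
  · exact Subtype.ne_of_mem_of_notMem (t := a) (by simp) (by simp [hab, hac])
  · exact Subtype.ne_of_mem_of_notMem (t := b) (by simp) (by simp [hbc, Ne.symm hδb]) |>.symm
  · exact mt adj.1 (Finset.not_disjoint_iff.mpr ⟨a, by simp, ha⟩)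
  · exact mt adj.1 (Finset.not_disjoint_iff.mpr ⟨b, by simp, by simp⟩)
  · exact mt adj.1 (Finset.not_disjoint_iff.mpr ⟨c, by simp, by simp⟩)

theorem kneser_isMonophonicSet_triangle (hn : 5 ≤ n) {a b c : Fin n} (hab : a ≠ b) (hac : a ≠ c)
    (hbc : b ≠ c) :
    IsMonophonicSet (kneser n 2) {kneserPair hab, kneserPair hac, kneserPair hbc} := by
  set S : Set {s : Finset (Fin n) // s.card = 2} :=
    {kneserPair hab, kneserPair hac, kneserPair hbc}
  intro w
  have of_eq (v) (hv : v ∈ S) {s t : Fin n} (hs : s ∈ w.1) (ht : t ∈ w.1) (hst : s ≠ t)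
      (hv' : v.1 = {s, t}) : ∃ x ∈ S, ∃ y ∈ S, w ∈ monoInterval (kneser n 2) x y := by
    obtain rfl : w = v := Subtype.ext ((Finset.eq_pair_of_card_eq_two w.2 hs ht hst).trans hv'.symm)
    exact ⟨w, hv, w, hv, mem_monoInterval_self w⟩
  by_cases ha : a ∈ w.1 <;> by_cases hb : b ∈ w.1 <;> by_cases hc : c ∈ w.1
  · exact of_eq (kneserPair hab) (by simp [S]) ha hb hab rfl
  · exact of_eq (kneserPair hab) (by simp [S]) ha hb hab rfl
  · exact of_eq (kneserPair hac) (by simp [S]) ha hc hac rfl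
  · exact ⟨_, by simp [S], _, by simp [S], kneser_mem_monoInterval_of_mem hn hab hbc ha hb hc⟩
  · exact of_eq (kneserPair hbc) (by simp [S]) hb hc hbc rfl
  · refine ⟨kneserPair hab, by simp [S], kneserPair hac, by simp [S], ?_⟩
    rw [kneserPair_comm hab]
    exact kneser_mem_monoInterval_of_mem hn hab.symm hac hb ha hc
  · refine ⟨kneserPair hac, by simp [S], kneserPair hab, by simp [S], ?_⟩
    rw [kneserPair_comm hac]
    exact kneser_mem_monoInterval_of_mem hn hac.symm hab hc ha hb
  · have adj {u v} : (kneser n 2).Adj u v ↔ Disjoint u.1 v.1 := kneser_adj_iff two_pos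
    refine ⟨kneserPair hab, by simp [S], kneserPair hac, by simp [S], mem_monoInterval_of_adj_adj
      (adj.2 (by simp [ha, hb])) (adj.2 (by simp [ha, hc])) ?_ ?_⟩
    · exact Subtype.ne_of_mem_of_notMem (t := b) (by simp) (by simp [hab.symm, hbc])
    · exact mt adj.1 (Finset.not_disjoint_iff.mpr ⟨a, by simp, by simp⟩)

theorem three_le_card_kneser_vertices (hn : 3 ≤ n) :
    3 ≤ Fintype.card {s : Finset (Fin n) // s.card = 2} := by
  rw [Fintype.card_finset_len, Fintype.card_fin]
  exact Nat.choose_le_choose 2 hn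

theorem kneser_not_isMonophonicSet_pair (hn : 3 ≤ n) (x y : {s : Finset (Fin n) // s.card = 2}) :
    ¬ IsMonophonicSet (kneser n 2) {x, y} := by
  intro h
  have cover := mem_monoInterval_of_isMonophonicSet_pair h
  by_cases hxy : x ≠ y ∧ ¬ (kneser n 2).Adj x y
  · obtain ⟨α, hαx, hαy⟩ := Finset.not_disjoint_iff.mp (mt (kneser_adj_iff two_pos).2 hxy.2)
    obtain ⟨β, hαβ, hx⟩ := Finset.exists_eq_pair_of_card_eq_two x.2 hαx
    obtain ⟨γ, hαγ, hy⟩ := Finset.exists_eq_pair_of_card_eq_two y.2 hαy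
    have hβγ : β ≠ γ := by rintro rfl; exact hxy.1 (Subtype.ext (hx.trans hy.symm))
    obtain rfl : x = kneserPair hαβ := Subtype.ext hx
    obtain rfl : y = kneserPair hαγ := Subtype.ext hy
    rcases cover (kneserPair hβγ) with h | h | h
    · exact Subtype.ne_of_mem_of_notMem (t := γ) (by simp) (by simp [hαγ.symm, hβγ.symm]) h
    · exact Subtype.ne_of_mem_of_notMem (t := β) (by simp) (by simp [hαβ.symm, hβγ]) h
    · exact kneserPair_notMem_monoInterval hαβ hαγ hβγ h
  · obtain ⟨w, -, hw⟩ := Finset.exists_mem_notMem_of_card_lt_card (s := {x, y})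
      (t := Finset.univ) (Finset.card_le_two.trans_lt (three_le_card_kneser_vertices hn))
    simp only [Finset.mem_insert, Finset.mem_singleton, not_or] at hw
    rcases cover w with h | h | h
    · exact hw.1 h
    · exact hw.2 h
    · exact hxy (ne_and_not_adj_of_mem_monoInterval h hw.1 hw.2)

theorem three_le_card_of_isMonophonicSet_kneser (hn : 3 ≤ n)
    {S : Finset {s : Finset (Fin n) // s.card = 2}} (hS : IsMonophonicSet (kneser n 2) S) :
    3 ≤ S.card := by
  by_contra! hS2
  have : Nonempty {s : Finset (Fin n) // s.card = 2} :=
    Fintype.card_pos_iff.mp (by linarith [three_le_card_kneser_vertices hn])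
  obtain ⟨x, y, hxy⟩ := Finset.exists_subset_pair_of_card_le_two (Nat.le_of_lt_succ hS2)
  exact kneser_not_isMonophonicSet_pair hn x y (hS.mono (by simpa using Finset.coe_subset.mpr hxy))

theorem kneser_exists_isMonophonicSet_card_three (hn : 5 ≤ n) :
    ∃ S : Finset {s : Finset (Fin n) // s.card = 2},
      S.card = 3 ∧ IsMonophonicSet (kneser n 2) S := by
  have hab : (⟨0, by omega⟩ : Fin n) ≠ ⟨1, by omega⟩ := by simp
  have hac : (⟨0, by omega⟩ : Fin n) ≠ ⟨2, by omega⟩ := by simp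
  have hbc : (⟨1, by omega⟩ : Fin n) ≠ ⟨2, by omega⟩ := by simp
  refine ⟨{kneserPair hab, kneserPair hac, kneserPair hbc}, Finset.card_eq_three.mpr
    ⟨_, _, _, ?_, ?_, ?_, rfl⟩, by simpa using kneser_isMonophonicSet_triangle hn hab hac hbc⟩
  · exact Subtype.ne_of_mem_of_notMem (t := ⟨1, by omega⟩) (by simp) (by simp [hab.symm, hbc])
  · exact Subtype.ne_of_mem_of_notMem (t := ⟨0, by omega⟩) (by simp) (by simp [hab, hac])
  · exact Subtype.ne_of_mem_of_notMem (t := ⟨0, by omega⟩) (by simp) (by simp [hab, hac])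

end Kneser

theorem stmt1 (n : ℕ) (hn : 5 ≤ n) : monophonicNumber (kneser n 2) = 3 := by
  obtain ⟨S, hS, hmono⟩ := kneser_exists_isMonophonicSet_card_three hn
  have h3 : 3 ∈ {m | ∃ S : Finset _, S.card = m ∧ IsMonophonicSet (kneser n 2) (S : Set _)} :=
    ⟨S, hS, hmono⟩
  refine le_antisymm (Nat.sInf_le h3) (le_csInf ⟨3, h3⟩ ?_)
  rintro m ⟨T, rfl, hT⟩
  exact three_le_card_of_isMonophonicSet_kneser (by omega) hT
end

section
/- In the Kneser graph K(n,2) with n ≥ 5, no pair of vertices forms a monophonic set; in particular, for u = {1,2} and v = {1,3}, the vertex {2,3} does not lie on any induced u,v-path. -/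
open SimpleGraph

variable {V : Type*}

/-!
Consecutive vertices of an induced path in `K(n,2)` are disjoint pairs, and any two
non-consecutive ones meet. If an induced path from `{a,b}` to `{a,c}` passed through `{b,c}`,
these constraints would push `{b,c}` at least three steps away from either end, and then force
the vertex two steps before it to be `{b,c}` as well. Two pairs that are equal or disjoint are
joined only by induced paths of length at most one, so they miss every third vertex, while two
meeting pairs `{a,b}`, `{a,c}` miss `{b,c}`.
-/

namespace Finset

variable {α : Type*} [DecidableEq α] {s t : Finset α} {a b : α}

theorem mem_or_mem_of_not_disjoint_pair (h : ¬ Disjoint s {a, b}) : a ∈ s ∨ b ∈ s := by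
  simpa [disjoint_insert_right, or_iff_not_and_not] using h

theorem eq_pair_of_card_eq_two_s2 (hs : s.card = 2) (ha : a ∈ s) (hb : b ∈ s) (hab : a ≠ b) :
    s = {a, b} :=
  (eq_of_subset_of_card_le (insert_subset ha (singleton_subset_iff.2 hb))
    (by rw [hs, card_pair hab])).symm

theorem exists_eq_pair_of_mem (hs : s.card = 2) (ha : a ∈ s) : ∃ b, a ≠ b ∧ s = {a, b} := by
  obtain ⟨b, hb⟩ := card_eq_one.1 (by rw [card_erase_of_mem ha, hs])
  have hba : b ∈ s.erase a := hb ▸ mem_singleton_self b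
  exact ⟨b, (ne_of_mem_erase hba).symm, by rw [← insert_erase ha, hb]⟩

theorem exists_eq_pair_of_not_disjoint (hs : s.card = 2) (ht : t.card = 2) (hst : s ≠ t)
    (h : ¬ Disjoint s t) :
    ∃ a b c, a ≠ b ∧ a ≠ c ∧ b ≠ c ∧ s = {a, b} ∧ t = {a, c} := by
  obtain ⟨a, has, hat⟩ := not_disjoint_iff.1 h
  obtain ⟨b, hab, rfl⟩ := exists_eq_pair_of_mem hs has
  obtain ⟨c, hac, rfl⟩ := exists_eq_pair_of_mem ht hat
  exact ⟨a, b, c, hab, hac, fun hbc => hst (by rw [hbc]), rfl, rfl⟩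

end Finset

section InducedPath

variable {G : SimpleGraph V} {u v w : V}

theorem IsInducedPath.reverse {p : G.Walk u v} (hp : IsInducedPath G p) :
    IsInducedPath G p.reverse :=
  ⟨hp.1.reverse, fun a b ha hb hab => by
    rw [Walk.toSubgraph_reverse]
    exact hp.2 a b (by simpa using ha) (by simpa using hb) hab⟩

theorem IsInducedPath.not_adj_getVert {p : G.Walk u v} (hp : IsInducedPath G p) {i j : ℕ}
    (hij : i + 2 ≤ j) (hj : j ≤ p.length) : ¬ G.Adj (p.getVert i) (p.getVert j) := by
  intro hadj
  obtain ⟨m, hm, hml⟩ := (p.toSubgraph_adj_iff).1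
    (hp.2 _ _ (p.getVert_mem_support i) (p.getVert_mem_support j) hadj)
  have hinj := hp.1.getVert_injOn
  rcases Sym2.eq_iff.1 hm with ⟨h1, h2⟩ | ⟨h1, h2⟩
  · have := hinj (show m ≤ p.length by omega) (show i ≤ p.length by omega) h1
    have := hinj (show m + 1 ≤ p.length by omega) hj h2
    omega
  · have := hinj (show m ≤ p.length by omega) hj h1
    have := hinj (show m + 1 ≤ p.length by omega) (show i ≤ p.length by omega) h2
    omega

theorem IsInducedPath.length_le_one_of_adj {p : G.Walk u v} (hp : IsInducedPath G p)
    (h : G.Adj u v) : p.length ≤ 1 := by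
  by_contra! hp2
  exact hp.not_adj_getVert (i := 0) hp2 le_rfl (by simpa using h)

theorem SimpleGraph.Walk.eq_or_eq_of_mem_support_of_length_le_one {p : G.Walk u v}
    (hp : p.length ≤ 1) (hw : w ∈ p.support) : w = u ∨ w = v := by
  obtain ⟨i, rfl, hi⟩ := p.mem_support_iff_exists_getVert.1 hw
  rcases Nat.le_one_iff_eq_zero_or_eq_one.1 (hi.trans hp) with rfl | rfl
  · exact .inl p.getVert_zero
  · exact .inr (by rw [show 1 = p.length by omega, p.getVert_length])

theorem monoInterval_comm_s2 (G : SimpleGraph V) (u v : V) :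
    monoInterval G u v = monoInterval G v u := by
  ext w
  constructor <;> rintro ⟨p, hp, hw⟩ <;> exact ⟨p.reverse, hp.reverse, by simpa using hw⟩

theorem monoInterval_subset_pair (h : u = v ∨ G.Adj u v) : monoInterval G u v ⊆ {u, v} := by
  rintro w ⟨p, hp, hw⟩
  refine Walk.eq_or_eq_of_mem_support_of_length_le_one ?_ hw
  rcases h with rfl | hadj
  · simp [Walk.length_eq_zero_iff.2 (Walk.isPath_iff_nil.1 hp.1)]
  · exact hp.length_le_one_of_adj hadj

theorem not_isMonophonicSet_pair (hwu : w ≠ u) (hwv : w ≠ v) (hw : w ∉ monoInterval G u v) :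
    ¬ IsMonophonicSet G {u, v} := by
  intro hS
  obtain ⟨x, hx, y, hy, hxy⟩ := hS w
  simp only [Set.mem_insert_iff, Set.mem_singleton_iff] at hx hy
  rcases hx with rfl | rfl <;> rcases hy with rfl | rfl
  · simpa [hwu] using monoInterval_subset_pair (Or.inl rfl) hxy
  · exact hw hxy
  · exact hw (monoInterval_comm_s2 G _ _ ▸ hxy)
  · simpa [hwv] using monoInterval_subset_pair (Or.inl rfl) hxy

end InducedPath

/-- The vertex sequence `s 0, …, s k` of an induced path in a Kneser graph of pairs. -/
structure IsInducedPairPath {α : Type*} (s : ℕ → Finset α) (k : ℕ) : Prop where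
  card_eq : ∀ j, (s j).card = 2
  disjoint_succ : ∀ j < k, Disjoint (s j) (s (j + 1))
  not_disjoint : ∀ j l, j + 2 ≤ l → l ≤ k → ¬ Disjoint (s j) (s l)
  injOn : Set.InjOn s {j | j ≤ k}

namespace IsInducedPairPath

open Finset

variable {α : Type*} {s : ℕ → Finset α} {k i : ℕ}

theorem reverse (h : IsInducedPairPath s k) : IsInducedPairPath (fun j => s (k - j)) k where
  card_eq j := h.card_eq (k - j)
  disjoint_succ j hj := by
    have hd := (h.disjoint_succ (k - (j + 1)) (by omega)).symm
    rwa [show k - (j + 1) + 1 = k - j by omega] at hd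
  not_disjoint j l hjl hl hd := h.not_disjoint (k - l) (k - j) (by omega) (by omega) hd.symm
  injOn j hj l hl hjl := by
    have := h.injOn (show k - j ≤ k by omega) (show k - l ≤ k by omega) hjl
    simp only [Set.mem_ofPred_eq] at hj hl
    omega

theorem not_disjoint_symm (h : IsInducedPairPath s k) {j l : ℕ} (hjl : j + 2 ≤ l)
    (hl : l ≤ k) : ¬ Disjoint (s l) (s j) :=
  fun hd => h.not_disjoint j l hjl hl hd.symm

variable [DecidableEq α] {a b c : α}

theorem three_le (h : IsInducedPairPath s k) (hab : a ≠ b) (hac : a ≠ c) (h0 : s 0 = {a, b})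
    (hk : s k = {a, c}) (hi : s i = {b, c}) (hik : i ≤ k) : 3 ≤ i := by
  have hai : a ∉ s i := by simp [hi, hab, hac]
  have hi0 : i ≠ 0 := by rintro rfl; simp [h0] at hai
  have hik' : i ≠ k := by rintro rfl; simp [hk] at hai
  have hi1 : i ≠ 1 := by
    rintro rfl
    exact disjoint_left.1 (h.disjoint_succ 0 (by omega)) (show b ∈ s 0 by simp [h0])
      (show b ∈ s 1 by simp [hi])
  have hi2 : i ≠ 2 := by
    rintro rfl
    have hd0 := h.disjoint_succ 0 (by omega)
    have hd1 := h.disjoint_succ 1 (by omega)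
    rcases mem_or_mem_of_not_disjoint_pair (hk ▸ h.not_disjoint 1 k (by omega) le_rfl)
      with ha | hc
    · exact disjoint_right.1 hd0 ha (by simp [h0])
    · exact disjoint_left.1 hd1 hc (by simp [hi])
  omega

theorem lt_add_three (h : IsInducedPairPath s k) (hbc : b ≠ c) (h0 : s 0 = {a, b})
    (hk : s k = {a, c}) (hi : s i = {b, c}) (hi3 : 3 ≤ i) : k < i + 3 := by
  by_contra! hik
  have hbi : b ∈ s i := by simp [hi]
  have hci : c ∈ s i := by simp [hi]
  have hprev : Disjoint (s (i - 1)) (s i) := by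
    simpa [show i - 1 + 1 = i by omega] using h.disjoint_succ (i - 1) (by omega)
  have hnext : Disjoint (s i) (s (i + 1)) := h.disjoint_succ i (by omega)
  have hnext2 : Disjoint (s (i + 1)) (s (i + 2)) := h.disjoint_succ (i + 1) (by omega)
  have hprev2 : Disjoint (s (i - 2)) (s (i - 1)) := by
    simpa [show i - 2 + 1 = i - 1 by omega] using h.disjoint_succ (i - 2) (by omega)
  -- `s (i ± 1)` avoid `b, c`, so contain `a`; then `s (i + 2) = {b, e}` with `e ∈ s (i - 1)`,
  -- and this pins `s (i - 2)` down to `{b, c}`.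
  have ha_prev : a ∈ s (i - 1) :=
    (mem_or_mem_of_not_disjoint_pair
      (h0 ▸ h.not_disjoint_symm (j := 0) (by omega) (by omega))).resolve_right
      fun hb => disjoint_left.1 hprev hb hbi
  have ha_next : a ∈ s (i + 1) :=
    (mem_or_mem_of_not_disjoint_pair
      (hk ▸ h.not_disjoint (i + 1) k (by omega) le_rfl)).resolve_right
      fun hc => disjoint_right.1 hnext hc hci
  have hb_next2 : b ∈ s (i + 2) :=
    (mem_or_mem_of_not_disjoint_pair
      (h0 ▸ h.not_disjoint_symm (j := 0) (by omega) (by omega))).resolve_left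
      fun ha => disjoint_left.1 hnext2 ha_next ha
  obtain ⟨e, he_prev, he_next2⟩ :=
    not_disjoint_iff.1 (h.not_disjoint (i - 1) (i + 2) (by omega) (by omega))
  have hbe : b ≠ e := by
    rintro rfl
    exact disjoint_left.1 hprev he_prev hbi
  have hnext2_eq : s (i + 2) = {b, e} := eq_pair_of_card_eq_two_s2 (h.card_eq _) hb_next2 he_next2 hbe
  have hc_prev2 : c ∈ s (i - 2) :=
    (mem_or_mem_of_not_disjoint_pair
      (hk ▸ h.not_disjoint (i - 2) k (by omega) le_rfl)).resolve_left
      fun ha => disjoint_left.1 hprev2 ha ha_prev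
  have hb_prev2 : b ∈ s (i - 2) :=
    (mem_or_mem_of_not_disjoint_pair
      (hnext2_eq ▸ h.not_disjoint (i - 2) (i + 2) (by omega) (by omega))).resolve_right
      fun he => disjoint_left.1 hprev2 he he_prev
  have hprev2_eq : s (i - 2) = s i := by
    rw [hi, eq_pair_of_card_eq_two_s2 (h.card_eq _) hb_prev2 hc_prev2 hbc]
  have := h.injOn (show i - 2 ≤ k by omega) (show i ≤ k by omega) hprev2_eq
  omega

theorem ne_third_pair (h : IsInducedPairPath s k) (hab : a ≠ b) (hac : a ≠ c) (hbc : b ≠ c)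
    (h0 : s 0 = {a, b}) (hk : s k = {a, c}) (hik : i ≤ k) : s i ≠ {b, c} := by
  intro hi
  have h3 := h.three_le hab hac h0 hk hi hik
  have h3' : 3 ≤ k - i :=
    h.reverse.three_le hac hab (by simpa using hk) (by simpa using h0)
      (by simpa [Nat.sub_sub_self hik, pair_comm] using hi) (Nat.sub_le k i)
  have := h.lt_add_three hbc h0 hk hi h3
  omega

end IsInducedPairPath

section Kneser

variable {n : ℕ}

theorem IsInducedPath.isInducedPairPath {u v : {s : Finset (Fin n) // s.card = 2}}
    {p : (kneser n 2).Walk u v} (hp : IsInducedPath (kneser n 2) p) :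
    IsInducedPairPath (fun j => (p.getVert j).1) p.length where
  card_eq j := (p.getVert j).2
  disjoint_succ j hj := (p.adj_getVert_succ hj).2
  not_disjoint j l hjl hl hd := by
    refine hp.not_adj_getVert hjl hl ⟨fun he => ?_, hd⟩
    have := hp.1.getVert_injOn (show j ≤ p.length by omega) hl he
    omega
  injOn j hj l hl hjl := hp.1.getVert_injOn hj hl (Subtype.ext hjl)

theorem kneser_not_mem_monoInterval {a b c : Fin n} (hab : a ≠ b) (hac : a ≠ c) (hbc : b ≠ c)
    {u v w : {s : Finset (Fin n) // s.card = 2}} (hu : u.1 = {a, b}) (hv : v.1 = {a, c})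
    (hw : w.1 = {b, c}) : w ∉ monoInterval (kneser n 2) u v := by
  rintro ⟨p, hp, hwp⟩
  obtain ⟨i, rfl, hi⟩ := p.mem_support_iff_exists_getVert.1 hwp
  exact hp.isInducedPairPath.ne_third_pair hab hac hbc (by simpa using hu) (by simpa using hv)
    hi hw

theorem kneser_exists_ne_ne (hn : 3 ≤ n) (x y : {s : Finset (Fin n) // s.card = 2}) :
    ∃ w, w ≠ x ∧ w ≠ y := by
  have hcard : ({x, y} : Finset _).card < Fintype.card {s : Finset (Fin n) // s.card = 2} :=
    calc ({x, y} : Finset _).card ≤ 2 := Finset.card_le_two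
      _ < Nat.choose 3 2 := by decide
      _ ≤ n.choose 2 := Nat.choose_le_choose 2 hn
      _ = _ := by simp [Fintype.card_finset_len]
  rw [← Finset.card_univ] at hcard
  obtain ⟨w, -, hw⟩ := Finset.exists_mem_notMem_of_card_lt_card hcard
  exact ⟨w, by simpa [not_or] using hw⟩

end Kneser

theorem stmt2 (n : ℕ) (hn : 5 ≤ n) :
    (∀ x y : {s : Finset (Fin n) // s.card = 2},
        ¬ IsMonophonicSet (kneser n 2) {x, y}) ∧
    (∀ u v w : {s : Finset (Fin n) // s.card = 2},
        u.1 = {⟨0, by omega⟩, ⟨1, by omega⟩} →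
        v.1 = {⟨0, by omega⟩, ⟨2, by omega⟩} →
        w.1 = {⟨1, by omega⟩, ⟨2, by omega⟩} →
        w ∉ monoInterval (kneser n 2) u v) := by
  refine ⟨fun x y => ?_, fun u v w => kneser_not_mem_monoInterval (by simp) (by simp) (by simp)⟩
  by_cases hxy : x = y ∨ (kneser n 2).Adj x y
  · obtain ⟨w, hwx, hwy⟩ := kneser_exists_ne_ne (by omega) x y
    exact not_isMonophonicSet_pair hwx hwy fun hw => by
      simpa [hwx, hwy] using monoInterval_subset_pair hxy hw
  · have hne : x.1 ≠ y.1 := fun h => hxy (.inl (Subtype.ext h))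
    obtain ⟨a, b, c, hab, hac, hbc, hx, hy⟩ :=
      Finset.exists_eq_pair_of_not_disjoint x.2 y.2 hne fun hd =>
        hxy (.inr ⟨fun h => hne (congrArg _ h), hd⟩)
    let w : {s : Finset (Fin n) // s.card = 2} := ⟨{b, c}, Finset.card_pair hbc⟩
    have hwx : w ≠ x := ne_of_apply_ne (a ∈ ·.1) (by simp [w, hx, hab, hac])
    have hwy : w ≠ y := ne_of_apply_ne (a ∈ ·.1) (by simp [w, hy, hab, hac])
    exact not_isMonophonicSet_pair hwx hwy (kneser_not_mem_monoInterval hab hac hbc hx hy rfl)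
end

section
/- Let a,b be distinct vertices of the odd Kneser graph K(2r+1,r) with |a ∩ b| = t ≥ 1. Write C = a∩b, A = a\b = {a_1,...,a_{r−t}}, B = b\a = {b_1,...,b_{r−t}}, D = [2r+1]\(a∪b). For i ∈ [r−t] let x_{2i−1} = {a_1,...,a_{i−1}} ∪ {b_{i+1},...,b_{r−t}} ∪ D, and for i ∈ {0}∪[r−t] let x_{2i} = {b_1,...,b_i} ∪ {a_{i+1},...,a_{r−t}} ∪ C. Then x_0 = a, x_1, ..., x_{2(r−t)} = b is an induced a,b-path of length 2(r−t) in K(2r+1,r). -/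
open SimpleGraph

variable {V : Type*}

/-!
Write `C = a ∩ b` and `D` for the complement of `a ∪ b`, and index `aSeq`, `bSeq` from `0`.
Membership of an element in the sets `x k` follows a fixed rhythm: elements of `C` lie in
exactly the even-indexed sets and elements of `D` in the odd-indexed ones, while `aSeq i`
behaves like `C` up to `x (2i)`, is absent from `x (2i+1)` and `x (2i+2)`, and behaves like `D`
afterwards (symmetrically `bSeq i` switches from `D` to `C`). Reading off these patterns,
consecutive sets are disjoint, while `x k` and `x l` with `l = k` or `l ≥ k + 2` share an element
of `C`, of `D`, `aSeq (k/2)` or `bSeq ((k+1)/2)`, according to the parities of `k` and `l`;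
here `t ≥ 1` makes `C` nonempty and `|a ∪ b| ≤ 2r` makes `D` nonempty. The same elements tell
distinct `x k` apart. Every `x k` is an `r`-set, so the `x k` are distinct vertices of
`K(2r+1, r)`, adjacent exactly when their indices differ by one: an induced path.
-/

namespace SimpleGraph

variable {G : SimpleGraph V}

lemma exists_walk_support_eq_map_range (f : ℕ → V) (n : ℕ)
    (hadj : ∀ k < n, G.Adj (f k) (f (k + 1))) :
    ∃ p : G.Walk (f 0) (f n), p.support = (List.range (n + 1)).map f := by
  have hne : (List.range (n + 1)).map f ≠ [] := by simp
  have hchain : ((List.range (n + 1)).map f).IsChain G.Adj :=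
    (List.isChain_map f).2 ((List.isChain_range_succ _ n).2 hadj)
  exact ⟨(Walk.ofSupport _ hne hchain).copy (by simp) (by simp), by simp⟩

theorem exists_isInducedPath_of_adj_iff {u v : V} (f : ℕ → V) (n : ℕ) (h0 : f 0 = u)
    (hn : f n = v) (hinj : Set.InjOn f (Set.Iic n))
    (hadj : ∀ k ≤ n, ∀ l ≤ n, G.Adj (f k) (f l) ↔ l = k + 1 ∨ k = l + 1) :
    ∃ p : G.Walk u v, IsInducedPath G p ∧ p.length = n ∧
      p.support = (List.range (n + 1)).map f := by
  subst h0 hn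
  obtain ⟨p, hp⟩ := exists_walk_support_eq_map_range (G := G) f n
    fun k hk => (hadj k hk.le (k + 1) hk).2 (.inl rfl)
  have hlen : p.length = n := by simpa [hp] using p.length_support.symm
  have hvert : ∀ k ≤ n, p.getVert k = f k := fun k hk => by
    simp [p.getVert_eq_support_getElem (hlen ▸ hk), hp]
  have hrange : ∀ k ∈ List.range (n + 1), k ≤ n := fun k hk =>
    Nat.lt_succ_iff.1 (List.mem_range.1 hk)
  refine ⟨p, ⟨.mk' ?_, ?_⟩, hlen, hp⟩
  · rw [hp]
    exact List.nodup_range.map_on fun k hk l hl => hinj (hrange k hk) (hrange l hl)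
  · intro x y hx hy hxy
    rw [hp, List.mem_map] at hx hy
    obtain ⟨k, hk, rfl⟩ := hx
    obtain ⟨l, hl, rfl⟩ := hy
    replace hk := hrange k hk
    replace hl := hrange l hl
    rcases (hadj k hk l hl).1 hxy with rfl | rfl
    · simpa [hvert, hk, hl] using p.toSubgraph_adj_getVert (i := k) (by omega)
    · simpa [hvert, hk, hl] using (p.toSubgraph_adj_getVert (i := l) (by omega)).symm

end SimpleGraph

open Finset

section SequenceImage

variable {α : Type*} [DecidableEq α] {s : ℕ → α} {m l u : ℕ}

lemma image_Ico_subset_of_mapsTo {S : Finset α} (hs : Set.MapsTo s (Set.Iio m) S) (hu : u ≤ m) :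
    (Ico l u).image s ⊆ S :=
  image_subset_iff.2 fun i hi => hs (Set.mem_Iio.2 (by simp at hi; omega))

lemma mem_image_Ico_iff_of_injOn (hs : Set.InjOn s (Set.Iio m)) {i : ℕ} (hi : i < m)
    (hu : u ≤ m) : s i ∈ (Ico l u).image s ↔ l ≤ i ∧ i < u := by
  rw [← mem_coe, coe_image, hs.mem_image_iff (fun j hj => by simp at hj ⊢; omega) hi]
  simp

lemma card_image_Ico_of_injOn (hs : Set.InjOn s (Set.Iio m)) (hu : u ≤ m) :
    ((Ico l u).image s).card = u - l := by
  rw [card_image_of_injOn (hs.mono fun j hj => by simp at hj ⊢; omega), Nat.card_Ico]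

lemma image_range_eq_of_bijOn {S : Finset α} (hs : Set.BijOn s (Set.Iio m) S) :
    (range m).image s = S := by
  simpa [← coe_inj] using hs.image_eq

lemma card_eq_of_bijOn {S : Finset α} (hs : Set.BijOn s (Set.Iio m) S) : S.card = m := by
  rw [← image_range_eq_of_bijOn hs, range_eq_Ico, card_image_Ico_of_injOn hs.injOn le_rfl,
    Nat.sub_zero]

lemma bijOn_of_image_range_eq {S : Finset α} (hinj : ∀ i < m, ∀ j < m, s i = s j → i = j)
    (him : (range m).image s = S) : Set.BijOn s (Set.Iio m) S := by
  rw [← him, coe_image, coe_range]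
  exact Set.InjOn.bijOn_image fun i hi j hj => hinj i hi j hj

end SequenceImage

section KneserPath

variable {α : Type*} [DecidableEq α] [Fintype α]

def kneserPathVertex (a b : Finset α) (aSeq bSeq : ℕ → α) (m k : ℕ) : Finset α :=
  if Even k then (range (k / 2)).image bSeq ∪ (Ico (k / 2) m).image aSeq ∪ (a ∩ b)
  else (range ((k - 1) / 2)).image aSeq ∪ (Ico ((k + 1) / 2) m).image bSeq ∪ (univ \ (a ∪ b))

variable {a b : Finset α} {aSeq bSeq : ℕ → α} {m k l : ℕ} {y : α}

lemma kneserPathVertex_two_mul (j : ℕ) :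
    kneserPathVertex a b aSeq bSeq m (2 * j) =
      (Ico 0 j).image bSeq ∪ (Ico j m).image aSeq ∪ (a ∩ b) := by
  rw [kneserPathVertex, if_pos (even_two_mul j), Nat.mul_div_cancel_left j two_pos, range_eq_Ico]

lemma kneserPathVertex_two_mul_add_one (j : ℕ) :
    kneserPathVertex a b aSeq bSeq m (2 * j + 1) =
      (Ico 0 j).image aSeq ∪ (Ico (j + 1) m).image bSeq ∪ (univ \ (a ∪ b)) := by
  have h₁ : (2 * j + 1 - 1) / 2 = j := by omega
  have h₂ : (2 * j + 1 + 1) / 2 = j + 1 := by omega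
  rw [kneserPathVertex, if_neg (Nat.not_even_two_mul_add_one j), h₁, h₂, range_eq_Ico]

lemma kneserPathVertex_zero (hA : Set.BijOn aSeq (Set.Iio m) ↑(a \ b)) :
    kneserPathVertex a b aSeq bSeq m 0 = a := by
  rw [← mul_zero 2, kneserPathVertex_two_mul, Ico_self, image_empty, empty_union,
    ← range_eq_Ico, image_range_eq_of_bijOn hA, sdiff_union_inter]

lemma kneserPathVertex_two_mul_self (hB : Set.BijOn bSeq (Set.Iio m) ↑(b \ a)) :
    kneserPathVertex a b aSeq bSeq m (2 * m) = b := by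
  rw [kneserPathVertex_two_mul, ← range_eq_Ico, image_range_eq_of_bijOn hB, Ico_self,
    image_empty, union_empty, inter_comm, sdiff_union_inter]

lemma mem_kneserPathVertex_of_mem_inter (hA : Set.MapsTo aSeq (Set.Iio m) ↑(a \ b))
    (hB : Set.MapsTo bSeq (Set.Iio m) ↑(b \ a)) (hy : y ∈ a ∩ b) (hk : k ≤ 2 * m) :
    y ∈ kneserPathVertex a b aSeq bSeq m k ↔ Even k := by
  rcases Nat.even_or_odd' k with ⟨j, rfl | rfl⟩
  · simp [kneserPathVertex_two_mul, hy]
  · rw [mem_inter] at hy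
    have hyA : y ∉ (Ico 0 j).image aSeq := fun h =>
      (mem_sdiff.1 (image_Ico_subset_of_mapsTo hA (by omega) h)).2 hy.2
    have hyB : y ∉ (Ico (j + 1) m).image bSeq := fun h =>
      (mem_sdiff.1 (image_Ico_subset_of_mapsTo hB le_rfl h)).2 hy.1
    simp only [kneserPathVertex_two_mul_add_one, mem_union, hyA, hyB]
    simp [hy]

lemma mem_kneserPathVertex_of_notMem_union (hA : Set.MapsTo aSeq (Set.Iio m) ↑(a \ b))
    (hB : Set.MapsTo bSeq (Set.Iio m) ↑(b \ a)) (hy : y ∉ a ∪ b) (hk : k ≤ 2 * m) :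
    y ∈ kneserPathVertex a b aSeq bSeq m k ↔ Odd k := by
  rcases Nat.even_or_odd' k with ⟨j, rfl | rfl⟩
  · rw [mem_union, not_or] at hy
    have hyB : y ∉ (Ico 0 j).image bSeq := fun h =>
      hy.2 (mem_sdiff.1 (image_Ico_subset_of_mapsTo hB (by omega) h)).1
    have hyA : y ∉ (Ico j m).image aSeq := fun h =>
      hy.1 (mem_sdiff.1 (image_Ico_subset_of_mapsTo hA le_rfl h)).1
    simp only [kneserPathVertex_two_mul, mem_union, hyA, hyB]
    simp [hy]
  · simp [kneserPathVertex_two_mul_add_one, hy]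

lemma aSeq_mem_kneserPathVertex_iff (hA : Set.BijOn aSeq (Set.Iio m) ↑(a \ b))
    (hB : Set.MapsTo bSeq (Set.Iio m) ↑(b \ a)) {i : ℕ} (hi : i < m) (hk : k ≤ 2 * m) :
    aSeq i ∈ kneserPathVertex a b aSeq bSeq m k ↔
      Even k ∧ k ≤ 2 * i ∨ Odd k ∧ 2 * i + 3 ≤ k := by
  have hiA := mem_sdiff.1 (hA.mapsTo hi)
  rcases Nat.even_or_odd' k with ⟨j, rfl | rfl⟩
  · have hiB : aSeq i ∉ (Ico 0 j).image bSeq := fun h =>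
      hiA.2 (mem_sdiff.1 (image_Ico_subset_of_mapsTo hB (by omega) h)).1
    simp only [kneserPathVertex_two_mul, mem_union, hiB,
      mem_image_Ico_iff_of_injOn hA.injOn hi le_rfl]
    simp [hiA.2, Nat.odd_iff]
    omega
  · have hiB : aSeq i ∉ (Ico (j + 1) m).image bSeq := fun h =>
      hiA.2 (mem_sdiff.1 (image_Ico_subset_of_mapsTo hB le_rfl h)).1
    simp only [kneserPathVertex_two_mul_add_one, mem_union, hiB,
      mem_image_Ico_iff_of_injOn hA.injOn hi (show j ≤ m by omega)]
    simp [hiA.1]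
    omega

lemma bSeq_mem_kneserPathVertex_iff (hA : Set.MapsTo aSeq (Set.Iio m) ↑(a \ b))
    (hB : Set.BijOn bSeq (Set.Iio m) ↑(b \ a)) {i : ℕ} (hi : i < m) (hk : k ≤ 2 * m) :
    bSeq i ∈ kneserPathVertex a b aSeq bSeq m k ↔
      Even k ∧ 2 * i + 2 ≤ k ∨ Odd k ∧ k < 2 * i := by
  have hiB := mem_sdiff.1 (hB.mapsTo hi)
  rcases Nat.even_or_odd' k with ⟨j, rfl | rfl⟩
  · have hiA : bSeq i ∉ (Ico j m).image aSeq := fun h =>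
      hiB.2 (mem_sdiff.1 (image_Ico_subset_of_mapsTo hA le_rfl h)).1
    simp only [kneserPathVertex_two_mul, mem_union, hiA,
      mem_image_Ico_iff_of_injOn hB.injOn hi (show j ≤ m by omega)]
    simp [hiB.2, Nat.odd_iff]
    omega
  · have hiA : bSeq i ∉ (Ico 0 j).image aSeq := fun h =>
      hiB.2 (mem_sdiff.1 (image_Ico_subset_of_mapsTo hA (by omega) h)).1
    simp only [kneserPathVertex_two_mul_add_one, mem_union, hiA,
      mem_image_Ico_iff_of_injOn hB.injOn hi le_rfl]
    simp [hiB.1]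
    omega

lemma disjoint_kneserPathVertex_succ (hA : Set.BijOn aSeq (Set.Iio m) ↑(a \ b))
    (hB : Set.BijOn bSeq (Set.Iio m) ↑(b \ a)) (hk : k < 2 * m) :
    Disjoint (kneserPathVertex a b aSeq bSeq m k) (kneserPathVertex a b aSeq bSeq m (k + 1)) := by
  rw [Finset.disjoint_left]
  intro y h₁ h₂
  by_cases ha : y ∈ a <;> by_cases hb : y ∈ b
  · have hy : y ∈ a ∩ b := mem_inter.2 ⟨ha, hb⟩
    rw [mem_kneserPathVertex_of_mem_inter hA.mapsTo hB.mapsTo hy hk.le] at h₁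
    rw [mem_kneserPathVertex_of_mem_inter hA.mapsTo hB.mapsTo hy hk, Nat.even_add_one] at h₂
    exact h₂ h₁
  · obtain ⟨i, hi, rfl⟩ := hA.surjOn (mem_coe.2 (mem_sdiff.2 ⟨ha, hb⟩))
    rw [aSeq_mem_kneserPathVertex_iff hA hB.mapsTo hi hk.le] at h₁
    rw [aSeq_mem_kneserPathVertex_iff hA hB.mapsTo hi hk] at h₂
    simp only [Nat.even_iff, Nat.odd_iff] at h₁ h₂
    omega
  · obtain ⟨i, hi, rfl⟩ := hB.surjOn (mem_coe.2 (mem_sdiff.2 ⟨hb, ha⟩))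
    rw [bSeq_mem_kneserPathVertex_iff hA.mapsTo hB hi hk.le] at h₁
    rw [bSeq_mem_kneserPathVertex_iff hA.mapsTo hB hi hk] at h₂
    simp only [Nat.even_iff, Nat.odd_iff] at h₁ h₂
    omega
  · have hy : y ∉ a ∪ b := by simp [ha, hb]
    rw [mem_kneserPathVertex_of_notMem_union hA.mapsTo hB.mapsTo hy hk.le] at h₁
    rw [mem_kneserPathVertex_of_notMem_union hA.mapsTo hB.mapsTo hy hk, Nat.odd_add_one] at h₂
    exact h₂ h₁

lemma not_disjoint_kneserPathVertex (hA : Set.BijOn aSeq (Set.Iio m) ↑(a \ b))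
    (hB : Set.BijOn bSeq (Set.Iio m) ↑(b \ a)) (hC : (a ∩ b).Nonempty)
    (hD : (univ \ (a ∪ b)).Nonempty) (hkl : k ≤ l) (hl : l ≤ 2 * m) (hne : l ≠ k + 1) :
    ¬Disjoint (kneserPathVertex a b aSeq bSeq m k) (kneserPathVertex a b aSeq bSeq m l) := by
  rw [Finset.not_disjoint_iff]
  rcases Nat.even_or_odd' k with ⟨i, rfl | rfl⟩ <;>
    rcases Nat.even_or_odd' l with ⟨j, rfl | rfl⟩
  · obtain ⟨y, hy⟩ := hC
    exact ⟨y, (mem_kneserPathVertex_of_mem_inter hA.mapsTo hB.mapsTo hy (by omega)).2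
      (even_two_mul i), (mem_kneserPathVertex_of_mem_inter hA.mapsTo hB.mapsTo hy hl).2
      (even_two_mul j)⟩
  · exact ⟨aSeq i, (aSeq_mem_kneserPathVertex_iff hA hB.mapsTo (by omega) (by omega)).2
      (.inl ⟨even_two_mul i, le_rfl⟩),
      (aSeq_mem_kneserPathVertex_iff hA hB.mapsTo (by omega) hl).2
      (.inr ⟨odd_two_mul_add_one j, by omega⟩)⟩
  · exact ⟨bSeq (i + 1), (bSeq_mem_kneserPathVertex_iff hA.mapsTo hB (by omega) (by omega)).2
      (.inr ⟨odd_two_mul_add_one i, by omega⟩),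
      (bSeq_mem_kneserPathVertex_iff hA.mapsTo hB (by omega) hl).2
      (.inl ⟨even_two_mul j, by omega⟩)⟩
  · obtain ⟨y, hy⟩ := hD
    have hy' : y ∉ a ∪ b := (mem_sdiff.1 hy).2
    exact ⟨y, (mem_kneserPathVertex_of_notMem_union hA.mapsTo hB.mapsTo hy' (by omega)).2
      (odd_two_mul_add_one i), (mem_kneserPathVertex_of_notMem_union hA.mapsTo hB.mapsTo hy' hl).2
      (odd_two_mul_add_one j)⟩

lemma disjoint_kneserPathVertex_iff (hA : Set.BijOn aSeq (Set.Iio m) ↑(a \ b))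
    (hB : Set.BijOn bSeq (Set.Iio m) ↑(b \ a)) (hC : (a ∩ b).Nonempty)
    (hD : (univ \ (a ∪ b)).Nonempty) (hk : k ≤ 2 * m) (hl : l ≤ 2 * m) :
    Disjoint (kneserPathVertex a b aSeq bSeq m k) (kneserPathVertex a b aSeq bSeq m l) ↔
      l = k + 1 ∨ k = l + 1 := by
  constructor
  · intro hdisj
    by_contra! hne
    rcases le_total k l with hkl | hlk
    · exact not_disjoint_kneserPathVertex hA hB hC hD hkl hl hne.1 hdisj
    · exact not_disjoint_kneserPathVertex hA hB hC hD hlk hk hne.2 hdisj.symm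
  · rintro (rfl | rfl)
    · exact disjoint_kneserPathVertex_succ hA hB (by omega)
    · exact (disjoint_kneserPathVertex_succ hA hB (by omega)).symm

lemma kneserPathVertex_injOn (hA : Set.BijOn aSeq (Set.Iio m) ↑(a \ b))
    (hB : Set.BijOn bSeq (Set.Iio m) ↑(b \ a)) (hC : (a ∩ b).Nonempty) :
    Set.InjOn (kneserPathVertex a b aSeq bSeq m) (Set.Iic (2 * m)) := by
  intro k hk l hl heq
  by_contra hne
  wlog hkl : k < l generalizing k l
  · exact this hl hk heq.symm (Ne.symm hne) (by omega)
  rw [Set.mem_Iic] at hk hl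
  obtain ⟨y, hy⟩ := hC
  rcases Nat.even_or_odd' k with ⟨i, rfl | rfl⟩ <;>
    rcases Nat.even_or_odd' l with ⟨j, rfl | rfl⟩
  · have h := Finset.ext_iff.1 heq (bSeq i)
    rw [bSeq_mem_kneserPathVertex_iff hA.mapsTo hB (by omega) hk,
      bSeq_mem_kneserPathVertex_iff hA.mapsTo hB (by omega) hl] at h
    simp only [Nat.even_iff, Nat.odd_iff] at h
    omega
  · have h := Finset.ext_iff.1 heq y
    rw [mem_kneserPathVertex_of_mem_inter hA.mapsTo hB.mapsTo hy hk,
      mem_kneserPathVertex_of_mem_inter hA.mapsTo hB.mapsTo hy hl] at h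
    exact Nat.not_even_two_mul_add_one j (h.1 (even_two_mul i))
  · have h := Finset.ext_iff.1 heq y
    rw [mem_kneserPathVertex_of_mem_inter hA.mapsTo hB.mapsTo hy hk,
      mem_kneserPathVertex_of_mem_inter hA.mapsTo hB.mapsTo hy hl] at h
    exact Nat.not_even_two_mul_add_one i (h.2 (even_two_mul j))
  · have h := Finset.ext_iff.1 heq (aSeq i)
    rw [aSeq_mem_kneserPathVertex_iff hA hB.mapsTo (by omega) hk,
      aSeq_mem_kneserPathVertex_iff hA hB.mapsTo (by omega) hl] at h
    simp only [Nat.even_iff, Nat.odd_iff] at h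
    omega

lemma card_kneserPathVertex {r : ℕ} (hA : Set.BijOn aSeq (Set.Iio m) ↑(a \ b))
    (hB : Set.BijOn bSeq (Set.Iio m) ↑(b \ a)) (hα : Fintype.card α = 2 * r + 1)
    (ha : a.card = r) (hb : b.card = r) (hk : k ≤ 2 * m) :
    (kneserPathVertex a b aSeq bSeq m k).card = r := by
  have hm : m + (a ∩ b).card = r := by
    rw [← card_eq_of_bijOn hA, card_sdiff_add_card_inter, ha]
  have hBC : Disjoint (b \ a) (a ∩ b) := inter_comm a b ▸ disjoint_sdiff_inter b a
  rcases Nat.even_or_odd' k with ⟨j, rfl | rfl⟩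
  · have hP := image_Ico_subset_of_mapsTo (l := 0) hB.mapsTo (show j ≤ m by omega)
    have hQ := image_Ico_subset_of_mapsTo (l := j) hA.mapsTo le_rfl
    rw [kneserPathVertex_two_mul, card_union_of_disjoint, card_union_of_disjoint,
      card_image_Ico_of_injOn hB.injOn (by omega), card_image_Ico_of_injOn hA.injOn le_rfl]
    · omega
    · exact disjoint_sdiff_sdiff.mono hP hQ
    · exact disjoint_union_left.2 ⟨hBC.mono_left hP, (disjoint_sdiff_inter a b).mono_left hQ⟩
  · have hD : (univ \ (a ∪ b)).card + m = r + 1 := by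
      rw [card_univ_sdiff, hα]
      have := card_union_add_card_inter a b
      omega
    have hP := image_Ico_subset_of_mapsTo (l := 0) hA.mapsTo (show j ≤ m by omega)
    have hQ := image_Ico_subset_of_mapsTo (l := j + 1) hB.mapsTo le_rfl
    rw [kneserPathVertex_two_mul_add_one, card_union_of_disjoint, card_union_of_disjoint,
      card_image_Ico_of_injOn hA.injOn (by omega), card_image_Ico_of_injOn hB.injOn le_rfl]
    · omega
    · exact disjoint_sdiff_sdiff.mono hP hQ
    · have hAD : Disjoint (a \ b) (univ \ (a ∪ b)) :=
        disjoint_sdiff.mono_left (sdiff_subset.trans subset_union_left)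
      have hBD : Disjoint (b \ a) (univ \ (a ∪ b)) :=
        disjoint_sdiff.mono_left (sdiff_subset.trans subset_union_right)
      exact disjoint_union_left.2 ⟨hAD.mono_left hP, hBD.mono_left hQ⟩

end KneserPath

theorem exists_isInducedPath_kneser {n r N : ℕ} {u v : {s : Finset (Fin n) // s.card = r}}
    (x : ℕ → Finset (Fin n)) (h0 : x 0 = u.1) (hN : x N = v.1)
    (hcard : ∀ k ≤ N, (x k).card = r) (hinj : Set.InjOn x (Set.Iic N))
    (hdisj : ∀ k ≤ N, ∀ l ≤ N, Disjoint (x k) (x l) ↔ l = k + 1 ∨ k = l + 1) :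
    ∃ p : (kneser n r).Walk u v, IsInducedPath (kneser n r) p ∧ p.length = N ∧
      p.support.map Subtype.val = (List.range (N + 1)).map x := by
  -- `x k` need not be an `r`-set for `k > N`, so the indices are clamped to `N`.
  let f : ℕ → {s : Finset (Fin n) // s.card = r} :=
    fun k => ⟨x (min k N), hcard _ (min_le_right k N)⟩
  have hf : ∀ k ≤ N, (f k).1 = x k := fun k hk => by simp [f, hk]
  have hfinj : Set.InjOn f (Set.Iic N) := fun k hk l hl hkl =>
    hinj hk hl (by rw [← hf k hk, ← hf l hl, hkl])
  obtain ⟨p, hp, hlen, hsupp⟩ := SimpleGraph.exists_isInducedPath_of_adj_iff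
    (G := kneser n r) (u := u) (v := v) f N (Subtype.ext (by rw [hf 0 N.zero_le, h0]))
    (Subtype.ext (by rw [hf N le_rfl, hN])) hfinj fun k hk l hl => by
      change f k ≠ f l ∧ Disjoint (f k).1 (f l).1 ↔ _
      rw [hf k hk, hf l hl, hdisj k hk l hl, and_iff_right_iff_imp]
      exact fun hkl heq => by have := hfinj hk hl heq; omega
  refine ⟨p, hp, hlen, ?_⟩
  rw [hsupp, List.map_map]
  exact List.map_congr_left fun k hk => hf k (Nat.lt_succ_iff.1 (List.mem_range.1 hk))

theorem stmt3_general (r t : ℕ) (ht : 1 ≤ t)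
    (a b : {s : Finset (Fin (2 * r + 1)) // s.card = r})
    (hcap : (a.1 ∩ b.1).card = t)
    (aSeq bSeq : ℕ → Fin (2 * r + 1))
    (haInj : ∀ i < r - t, ∀ j < r - t, aSeq i = aSeq j → i = j)
    (hbInj : ∀ i < r - t, ∀ j < r - t, bSeq i = bSeq j → i = j)
    (haIm : (Finset.range (r - t)).image aSeq = a.1 \ b.1)
    (hbIm : (Finset.range (r - t)).image bSeq = b.1 \ a.1)
    (x : ℕ → Finset (Fin (2 * r + 1)))
    (hx : ∀ k, x k = if Even k
        then (Finset.range (k / 2)).image bSeq ∪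
          (Finset.Ico (k / 2) (r - t)).image aSeq ∪ (a.1 ∩ b.1)
        else (Finset.range ((k - 1) / 2)).image aSeq ∪
          (Finset.Ico ((k + 1) / 2) (r - t)).image bSeq ∪
          (Finset.univ \ (a.1 ∪ b.1))) :
    ∃ p : (kneser (2 * r + 1) r).Walk a b,
      IsInducedPath (kneser (2 * r + 1) r) p ∧ p.length = 2 * (r - t) ∧
      p.support.map Subtype.val = (List.range (2 * (r - t) + 1)).map x := by
  have hA := bijOn_of_image_range_eq haInj haIm
  have hB := bijOn_of_image_range_eq hbInj hbIm
  have hC : (a.1 ∩ b.1).Nonempty := card_pos.1 (by omega)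
  have hD : (univ \ (a.1 ∪ b.1)).Nonempty := by
    rw [← card_pos, card_univ_sdiff, Fintype.card_fin]
    have := card_union_le a.1 b.1
    rw [a.2, b.2] at this
    omega
  obtain rfl : x = kneserPathVertex a.1 b.1 aSeq bSeq (r - t) := funext hx
  exact exists_isInducedPath_kneser _ (kneserPathVertex_zero hA)
    (kneserPathVertex_two_mul_self hB)
    (fun k hk => card_kneserPathVertex hA hB (Fintype.card_fin _) a.2 b.2 hk)
    (kneserPathVertex_injOn hA hB hC)
    (fun k hk l hl => disjoint_kneserPathVertex_iff hA hB hC hD hk hl)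

theorem stmt3 (r t : ℕ) (ht : 1 ≤ t)
    (a b : {s : Finset (Fin (2 * r + 1)) // s.card = r})
    (hab : a ≠ b) (hcap : (a.1 ∩ b.1).card = t)
    (aSeq bSeq : ℕ → Fin (2 * r + 1))
    (haInj : ∀ i < r - t, ∀ j < r - t, aSeq i = aSeq j → i = j)
    (hbInj : ∀ i < r - t, ∀ j < r - t, bSeq i = bSeq j → i = j)
    (haIm : (Finset.range (r - t)).image aSeq = a.1 \ b.1)
    (hbIm : (Finset.range (r - t)).image bSeq = b.1 \ a.1)
    (x : ℕ → Finset (Fin (2 * r + 1)))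
    (hx : ∀ k, x k = if Even k
        then (Finset.range (k / 2)).image bSeq ∪
          (Finset.Ico (k / 2) (r - t)).image aSeq ∪ (a.1 ∩ b.1)
        else (Finset.range ((k - 1) / 2)).image aSeq ∪
          (Finset.Ico ((k + 1) / 2) (r - t)).image bSeq ∪
          (Finset.univ \ (a.1 ∪ b.1))) :
    ∃ p : (kneser (2 * r + 1) r).Walk a b,
      IsInducedPath (kneser (2 * r + 1) r) p ∧ p.length = 2 * (r - t) ∧
      p.support.map Subtype.val = (List.range (2 * (r - t) + 1)).map x :=
  stmt3_general r t ht a b hcap aSeq bSeq haInj hbInj haIm hbIm x hx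
end

section
/- If G is a strongly 2-monophonic graph not isomorphic to the path P_3, then G has no cut vertices. -/
open SimpleGraph

variable {V : Type*}

/-! Let `v` be a cut vertex, with `x` and `y` in different components of `G - v`, and let `C` be
the component of `x`. Two non-adjacent vertices of `C` would have `y` on an induced path between
them, which would pass twice through `v`; so `C` is a clique. If `C` had a second vertex `w`, the
induced `x,y`-path through `w` would start with the edge `xw`, so `x` is not adjacent to `v`; by
symmetry no vertex of `C` would be adjacent to `v`, yet the last vertex before `v` on an `x,y`-path
is. Hence `C = {x}`, likewise `{y}` is a component, and every induced `x,y`-path is `x v y`: the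
graph is `P₃`. -/

namespace SimpleGraph

/-- `a` and `b` lie in the same component of `G - v`. -/
def ReachableAvoiding (G : SimpleGraph V) (v a b : V) : Prop :=
  ∃ p : G.Walk a b, v ∉ p.support

namespace ReachableAvoiding

variable {G : SimpleGraph V} {v a b c : V}

lemma refl (ha : a ≠ v) : G.ReachableAvoiding v a a :=
  ⟨Walk.nil, by simpa using ha.symm⟩

lemma of_adj (hab : G.Adj a b) (ha : a ≠ v) (hb : b ≠ v) : G.ReachableAvoiding v a b :=
  ⟨hab.toWalk, by simp [ha.symm, hb.symm]⟩

lemma symm (h : G.ReachableAvoiding v a b) : G.ReachableAvoiding v b a :=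
  let ⟨p, hp⟩ := h
  ⟨p.reverse, by simpa using hp⟩

lemma trans (h₁ : G.ReachableAvoiding v a b) (h₂ : G.ReachableAvoiding v b c) :
    G.ReachableAvoiding v a c :=
  let ⟨p, hp⟩ := h₁
  let ⟨q, hq⟩ := h₂
  ⟨p.append q, by simp [Walk.mem_support_append_iff, hp, hq]⟩

lemma ne_left (h : G.ReachableAvoiding v a b) : a ≠ v :=
  let ⟨p, hp⟩ := h
  fun ha => hp (ha ▸ p.start_mem_support)

lemma ne_right (h : G.ReachableAvoiding v a b) : b ≠ v :=
  h.symm.ne_left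

lemma reachable_induce (h : G.ReachableAvoiding v a b) :
    (G.induce {u | u ≠ v}).Reachable ⟨a, h.ne_left⟩ ⟨b, h.ne_right⟩ :=
  let ⟨p, hp⟩ := h
  ⟨p.induce {u | u ≠ v} fun _ hu huv => hp (huv ▸ hu)⟩

end ReachableAvoiding

namespace Walk

variable {G : SimpleGraph V} {a b v w : V}

lemma IsPath.eq_of_mem_support_takeUntil_of_mem_support_dropUntil [DecidableEq V]
    {p : G.Walk a b} (hp : p.IsPath) (hw : w ∈ p.support)
    (h₁ : v ∈ (p.takeUntil w hw).support) (h₂ : v ∈ (p.dropUntil w hw).support) :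
    v = w := by
  have hsplit : (p.takeUntil w hw).support ++ (p.dropUntil w hw).support.tail = p.support := by
    rw [← support_append, take_spec]
  have hnodup := hp.support_nodup
  rw [← hsplit] at hnodup
  rw [← (p.dropUntil w hw).cons_tail_support, List.mem_cons] at h₂
  exact h₂.resolve_right (List.disjoint_of_nodup_append hnodup h₁)

lemma IsPath.reachableAvoiding_or {p : G.Walk a b} (hp : p.IsPath) (hw : w ∈ p.support)
    (hvw : v ≠ w) : G.ReachableAvoiding v a w ∨ G.ReachableAvoiding v w b := by
  classical
  by_contra! h
  exact hvw (hp.eq_of_mem_support_takeUntil_of_mem_support_dropUntil hw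
    (not_not.mp fun hv => h.1 ⟨_, hv⟩) (not_not.mp fun hv => h.2 ⟨_, hv⟩))

lemma exists_reachableAvoiding_adj (p : G.Walk a v) (ha : a ≠ v) :
    ∃ u, G.ReachableAvoiding v a u ∧ G.Adj u v := by
  induction p with
  | nil => exact absurd rfl ha
  | @cons a c v hac q ih =>
    by_cases hc : c = v
    · exact ⟨a, .refl ha, hc ▸ hac⟩
    · obtain ⟨u, hcu, huv⟩ := ih hc
      exact ⟨u, (ReachableAvoiding.of_adj hac ha hc).trans hcu, huv⟩

end Walk

variable {G : SimpleGraph V} {a b v w x y : V}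

lemma IsInducedPath.reverse {p : G.Walk x y} (hp : IsInducedPath G p) :
    IsInducedPath G p.reverse := by
  refine ⟨hp.1.reverse, fun a b ha hb hab => ?_⟩
  rw [Walk.toSubgraph_reverse]
  exact hp.2 a b (by simpa using ha) (by simpa using hb) hab

lemma IsInducedPath.snd_eq_of_adj {p : G.Walk x y} (hp : IsInducedPath G p)
    (hw : w ∈ p.support) (hxw : G.Adj x w) : p.snd = w :=
  hp.1.snd_of_toSubgraph_adj (hp.2 x w p.start_mem_support hw hxw)

lemma monoInterval_comm (G : SimpleGraph V) (x y : V) :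
    monoInterval G x y = monoInterval G y x := by
  suffices ∀ x y, monoInterval G x y ⊆ monoInterval G y x from (this x y).antisymm (this y x)
  rintro x y w ⟨p, hp, hw⟩
  exact ⟨p.reverse, hp.reverse, by simpa using hw⟩

lemma monoInterval_self (G : SimpleGraph V) (x : V) : monoInterval G x x = {x} := by
  refine Set.Subset.antisymm ?_ fun w hw => ⟨.nil, ⟨.nil, by simp⟩, by simpa using hw⟩
  rintro w ⟨p, hp, hw⟩
  simpa [Walk.nil_iff_support_eq.mp (Walk.isPath_iff_nil.mp hp.1)] using hw

lemma IsMonophonicSet.eq_or_eq_or_mem_monoInterval (h : IsMonophonicSet G {x, y}) (w : V) :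
    w = x ∨ w = y ∨ w ∈ monoInterval G x y := by
  obtain ⟨s, hs, t, ht, hw⟩ := h w
  simp only [Set.mem_insert_iff, Set.mem_singleton_iff] at hs ht
  rcases hs with rfl | rfl <;> rcases ht with rfl | rfl
  all_goals simp_all [monoInterval_self, monoInterval_comm G]

namespace Strongly2Monophonic

lemma exists_isInducedPath_mem (h : Strongly2Monophonic G) (hxy : x ≠ y) (hadj : ¬ G.Adj x y)
    {z : V} (hzx : z ≠ x) (hzy : z ≠ y) (w : V) :
    ∃ p : G.Walk x y, IsInducedPath G p ∧ w ∈ p.support := by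
  have hcases := (h x y hxy hadj).eq_or_eq_or_mem_monoInterval
  obtain ⟨p, hp, -⟩ : z ∈ monoInterval G x y := by simpa [hzx, hzy] using hcases z
  rcases hcases w with rfl | rfl | hw
  exacts [⟨p, hp, p.start_mem_support⟩, ⟨p, hp, p.end_mem_support⟩, hw]

variable (h : Strongly2Monophonic G) (hab : ¬ G.ReachableAvoiding v a b)
include h hab

lemma exists_isInducedPath_mem_of_not_reachableAvoiding (ha : a ≠ v) (hb : b ≠ v) (w : V) :
    ∃ p : G.Walk a b, IsInducedPath G p ∧ v ∈ p.support ∧ w ∈ p.support := by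
  have hne : a ≠ b := fun e => hab (e ▸ .refl ha)
  obtain ⟨p, hp, hw⟩ :=
    h.exists_isInducedPath_mem hne (fun e => hab (.of_adj e ha hb)) ha.symm hb.symm w
  exact ⟨p, hp, not_not.mp fun hv => hab ⟨p, hv⟩, hw⟩

lemma adj_of_reachableAvoiding {w₁ w₂ : V} (hb : b ≠ v) (h₁ : G.ReachableAvoiding v a w₁)
    (h₂ : G.ReachableAvoiding v a w₂) (hne : w₁ ≠ w₂) : G.Adj w₁ w₂ := by
  by_contra hn
  rcases (h w₁ w₂ hne hn).eq_or_eq_or_mem_monoInterval b with rfl | rfl | ⟨p, hp, hbp⟩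
  · exact hab h₁
  · exact hab h₂
  · rcases hp.1.reachableAvoiding_or hbp hb.symm with h₁b | hb₂
    exacts [hab (h₁.trans h₁b), hab (h₂.trans hb₂.symm)]

lemma exists_reachableAvoiding_adj (ha : a ≠ v) (hb : b ≠ v) :
    ∃ u, G.ReachableAvoiding v a u ∧ G.Adj u v := by
  classical
  obtain ⟨p, -, hvp, -⟩ := h.exists_isInducedPath_mem_of_not_reachableAvoiding hab ha hb v
  exact (p.takeUntil v hvp).exists_reachableAvoiding_adj ha

lemma not_adj_of_reachableAvoiding (ha : a ≠ v) (hb : b ≠ v) (hw : G.ReachableAvoiding v a w)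
    (hwa : w ≠ a) : ¬ G.Adj a v := by
  intro hav
  obtain ⟨p, hp, hvp, hwp⟩ := h.exists_isInducedPath_mem_of_not_reachableAvoiding hab ha hb w
  have haw := h.adj_of_reachableAvoiding hab hb (.refl ha) hw hwa.symm
  exact hw.ne_right ((hp.snd_eq_of_adj hwp haw).symm.trans (hp.snd_eq_of_adj hvp hav))

lemma eq_of_reachableAvoiding (ha : a ≠ v) (hb : b ≠ v) (hw : G.ReachableAvoiding v a w) :
    w = a := by
  by_contra hwa
  obtain ⟨u, hau, huv⟩ := h.exists_reachableAvoiding_adj hab ha hb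
  have hub : ¬ G.ReachableAvoiding v u b := fun hub => hab (hau.trans hub)
  by_cases hua : u = a
  · subst hua
    exact h.not_adj_of_reachableAvoiding hab ha hb hw hwa huv
  · exact h.not_adj_of_reachableAvoiding hub hau.ne_right hb hau.symm (Ne.symm hua) huv

lemma adj_of_not_reachableAvoiding (ha : a ≠ v) (hb : b ≠ v) : G.Adj a v := by
  obtain ⟨u, hau, huv⟩ := h.exists_reachableAvoiding_adj hab ha hb
  rwa [h.eq_of_reachableAvoiding hab ha hb hau] at huv

end Strongly2Monophonic

lemma nonempty_iso_pathGraph_three (hall : ∀ w, w = x ∨ w = v ∨ w = y) (hxy : x ≠ y)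
    (hxv : G.Adj x v) (hvy : G.Adj v y) (hnxy : ¬ G.Adj x y) : Nonempty (G ≃g pathGraph 3) := by
  let f : Fin 3 → V := ![x, v, y]
  have hf : f.Bijective := by
    refine ⟨fun i j hij => ?_, fun w => ?_⟩
    · fin_cases i <;> fin_cases j <;>
        simp_all [f, hxv.ne, hvy.ne, hxv.ne.symm, hvy.ne.symm, hxy.symm]
    · rcases hall w with rfl | rfl | rfl
      exacts [⟨0, rfl⟩, ⟨1, rfl⟩, ⟨2, rfl⟩]
  have hnyx : ¬ G.Adj y x := fun h => hnxy h.symm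
  refine ⟨(RelIso.mk (Equiv.ofBijective f hf) fun {i j} => ?_).symm⟩
  fin_cases i <;> fin_cases j <;> simp [f, pathGraph_adj, hxv, hvy, hxv.symm, hvy.symm, hnxy, hnyx]

end SimpleGraph

theorem stmt8 {V : Type*} (G : SimpleGraph V) (h : Strongly2Monophonic G)
    (hP3 : ¬ Nonempty (G ≃g pathGraph 3)) :
    ∀ v : V, ¬ (G.Connected ∧ ¬ (G.induce {u : V | u ≠ v}).Preconnected) := by
  rintro v ⟨-, hcut⟩
  obtain ⟨⟨x, hx⟩, ⟨y, hy⟩, hxy⟩ := by simpa only [Preconnected, not_forall] using hcut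
  have hRxy : ¬ G.ReachableAvoiding v x y := fun hr => hxy hr.reachable_induce
  have hRyx : ¬ G.ReachableAvoiding v y x := fun hr => hRxy hr.symm
  have hall : ∀ w, w = x ∨ w = v ∨ w = y := by
    intro w
    by_cases hwv : w = v
    · exact .inr (.inl hwv)
    obtain ⟨p, hp, -, hwp⟩ := h.exists_isInducedPath_mem_of_not_reachableAvoiding hRxy hx hy w
    rcases hp.1.reachableAvoiding_or hwp (Ne.symm hwv) with hxw | hwy
    · exact .inl (h.eq_of_reachableAvoiding hRxy hx hy hxw)
    · exact .inr (.inr (h.eq_of_reachableAvoiding hRyx hy hx hwy.symm))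
  exact hP3 (nonempty_iso_pathGraph_three hall (fun e => hRxy (e ▸ .refl hx))
    (h.adj_of_not_reachableAvoiding hRxy hx hy) (h.adj_of_not_reachableAvoiding hRyx hy hx).symm
    fun e => hRxy (.of_adj e hx hy))
end

section
/- If G is a strongly 2-monophonic graph with two non-adjacent simplicial vertices x and y, then every vertex z ∉ {x,y} has degree n(G) − 1; in particular, x and y are the only pair of non-adjacent vertices of G. -/
open SimpleGraph

variable {V : Type*}

/-
An interior vertex of an induced path has two path-neighbours that are not adjacent, since an
edge between them would be a chord; so a simplicial vertex can only be an endpoint of an induced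
path, and therefore lies in every monophonic set. If `a, b` are distinct and non-adjacent, the
monophonic set `{a, b}` thus contains both simplicial vertices `x ≠ y`, forcing `{a, b} = {x, y}`;
in particular any other vertex is adjacent to all the rest.
-/

def IsSimplicial (G : SimpleGraph V) (w : V) : Prop :=
  G.IsClique (G.neighborSet w ∪ {w})

variable {G : SimpleGraph V}

lemma SimpleGraph.Walk.IsPath.not_toSubgraph_adj_getVert_pred_succ {u v : V} {p : G.Walk u v}
    (hp : p.IsPath) {i : ℕ} (h0 : i ≠ 0) (hi : i < p.length) :
    ¬ p.toSubgraph.Adj (p.getVert (i - 1)) (p.getVert (i + 1)) := by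
  rw [toSubgraph_adj_iff]
  rintro ⟨j, hj, hjl⟩
  have inj {a b : ℕ} (ha : a ≤ p.length) (hb : b ≤ p.length)
      (hab : p.getVert a = p.getVert b) : a = b :=
    hp.getVert_injOn ha hb hab
  rcases Sym2.eq_iff.mp hj with ⟨h1, h2⟩ | ⟨h1, h2⟩ <;>
  · have := inj (by omega) (by omega) h1
    have := inj (by omega) (by omega) h2
    omega

lemma IsInducedPath.eq_or_eq_of_isSimplicial {u v w : V} {p : G.Walk u v}
    (hp : IsInducedPath G p) (hw : IsSimplicial G w) (hws : w ∈ p.support) : w = u ∨ w = v := by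
  obtain ⟨i, rfl, hil⟩ := SimpleGraph.Walk.mem_support_iff_exists_getVert.mp hws
  by_contra! hend
  have h0 : i ≠ 0 := by
    rintro rfl
    exact hend.1 p.getVert_zero
  have hi : i < p.length := lt_of_le_of_ne hil (by rintro rfl; exact hend.2 p.getVert_length)
  have hpred : G.Adj (p.getVert i) (p.getVert (i - 1)) := by
    simpa [Nat.sub_add_cancel (Nat.pos_of_ne_zero h0)] using
      (p.adj_getVert_succ (i := i - 1) (by omega)).symm
  have hsucc : G.Adj (p.getVert i) (p.getVert (i + 1)) := p.adj_getVert_succ hi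
  have hne : p.getVert (i - 1) ≠ p.getVert (i + 1) := fun h => by
    have := hp.1.getVert_injOn (show i - 1 ≤ p.length by omega)
      (show i + 1 ≤ p.length by omega) h
    omega
  have hchord : G.Adj (p.getVert (i - 1)) (p.getVert (i + 1)) :=
    hw (Or.inl hpred) (Or.inl hsucc) hne
  exact hp.1.not_toSubgraph_adj_getVert_pred_succ h0 hi
    (hp.2 _ _ (p.getVert_mem_support _) (p.getVert_mem_support _) hchord)

lemma IsMonophonicSet.mem_of_isSimplicial {S : Set V} {w : V} (hS : IsMonophonicSet G S)
    (hw : IsSimplicial G w) : w ∈ S := by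
  obtain ⟨a, ha, b, hb, p, hp, hws⟩ := hS w
  rcases hp.eq_or_eq_of_isSimplicial hw hws with rfl | rfl
  exacts [ha, hb]

lemma Strongly2Monophonic.pair_eq_of_not_adj (h : Strongly2Monophonic G) {x y : V} (hxy : x ≠ y)
    (hx : IsSimplicial G x) (hy : IsSimplicial G y) {a b : V} (hab : a ≠ b)
    (hnab : ¬ G.Adj a b) :
    ({a, b} : Set V) = {x, y} := by
  have hm := h a b hab hnab
  rcases hm.mem_of_isSimplicial hx with rfl | rfl <;>
    rcases hm.mem_of_isSimplicial hy with rfl | rfl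
  exacts [absurd rfl hxy, rfl, Set.pair_comm _ _, absurd rfl hxy]

theorem stmt14_general {V : Type*} [Fintype V] (G : SimpleGraph V) [DecidableRel G.Adj]
    (h : Strongly2Monophonic G) (x y : V) (hxy : x ≠ y)
    (hx : G.IsClique (G.neighborSet x ∪ {x}))
    (hy : G.IsClique (G.neighborSet y ∪ {y})) :
    (∀ z : V, z ≠ x → z ≠ y → G.degree z = Fintype.card V - 1) ∧
    (∀ a b : V, a ≠ b → ¬ G.Adj a b → ({a, b} : Set V) = {x, y}) := by
  have hpair {a b : V} (hab : a ≠ b) (hnab : ¬ G.Adj a b) : ({a, b} : Set V) = {x, y} :=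
    h.pair_eq_of_not_adj hxy hx hy hab hnab
  refine ⟨fun z hzx hzy => ?_, fun _ _ => hpair⟩
  rw [degree_eq_card_sub_one]
  intro v hzv
  by_contra hnzv
  have hz : z ∈ ({x, y} : Set V) := hpair hzv hnzv ▸ Set.mem_insert z {v}
  rcases hz with rfl | rfl
  exacts [hzx rfl, hzy rfl]

theorem stmt14 {V : Type*} [Fintype V] [DecidableEq V] (G : SimpleGraph V) [DecidableRel G.Adj]
    (h : Strongly2Monophonic G) (x y : V) (hxy : x ≠ y) (hadj : ¬ G.Adj x y)
    (hx : G.IsClique (G.neighborSet x ∪ {x}))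
    (hy : G.IsClique (G.neighborSet y ∪ {y})) :
    (∀ z : V, z ≠ x → z ≠ y → G.degree z = Fintype.card V - 1) ∧
    (∀ a b : V, a ≠ b → ¬ G.Adj a b → ({a, b} : Set V) = {x, y}) :=
  stmt14_general G h x y hxy hx hy
end

section
/- Let G be a strongly 2-monophonic graph not isomorphic to P_3, and let x,y,z be three distinct vertices of G. Then there exist an induced x,y-path P and an induced y,z-path Q whose only common vertex is y. -/
open SimpleGraph

variable {V : Type*}

/-!
Strong 2-monophonicity forces `G` to be connected and free of cut vertices: if `c` separated
two of its neighbours `a'`, `b'`, every induced `a'`-`b'` path would be `a' c b'`, and since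
every vertex lies on such a path, `G` would be `P₃`. By Whitney's argument `x` and `y` are then
joined by two internally disjoint paths; a `z`-`y` walk avoiding `x`, cut at its first vertex on
them and continued along that path, gives an `x`-`y` and a `z`-`y` walk meeting only in `y`.
Shortening both to chordless paths inside their supports yields `P` and `Q`.
-/

namespace SimpleGraph.Walk

variable {G : SimpleGraph V} {a b c u v w : V}

lemma exists_eq_append_first {P : V → Prop} (p : G.Walk u v) (hv : P v) :
    ∃ w, P w ∧ ∃ (p₁ : G.Walk u w) (p₂ : G.Walk w v),
      p = p₁.append p₂ ∧ ∀ t ∈ p₁.support, P t → t = w := by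
  induction p with
  | nil => exact ⟨_, hv, nil, nil, rfl, by simp⟩
  | @cons u _ _ h p ih =>
    by_cases hu : P u
    · exact ⟨u, hu, nil, cons h p, rfl, by simp⟩
    · obtain ⟨w, hw, p₁, p₂, rfl, hfirst⟩ := ih hv
      refine ⟨w, hw, cons h p₁, p₂, rfl, ?_⟩
      rintro t (_ | ⟨_, ht⟩) hPt
      · exact absurd hPt hu
      · exact hfirst t ht hPt

lemma isChordless_nil : (nil : G.Walk u u).IsChordless := by
  simp [isChordless_iff_forall_mem_edges]

lemma IsChordless.reverse {p : G.Walk u v} (hp : p.IsChordless) : p.reverse.IsChordless := by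
  rw [isChordless_iff_forall_mem_edges] at hp ⊢
  intro a b ha hb hab
  rw [support_reverse, List.mem_reverse] at ha hb
  rw [edges_reverse, List.mem_reverse]
  exact hp ha hb hab

lemma IsPath.eq_of_mem_support_of_append {p : G.Walk u v} {q : G.Walk v w}
    (hpq : (p.append q).IsPath) (hp : a ∈ p.support) (hq : a ∈ q.support) : a = v := by
  by_contra hne
  exact hpq.ne_of_mem_support_of_append hne hp hq rfl

lemma IsChordless.of_append_left {p : G.Walk u v} {q : G.Walk v w}
    (hpath : (p.append q).IsPath) (hpq : (p.append q).IsChordless) : p.IsChordless := by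
  rw [isChordless_iff_forall_mem_edges] at hpq ⊢
  intro a b ha hb hab
  have hmem := hpq (p.support_subset_support_append_left q ha)
    (p.support_subset_support_append_left q hb) hab
  rw [edges_append, List.mem_append] at hmem
  refine hmem.resolve_right fun hq => hab.ne ?_
  rw [hpath.eq_of_mem_support_of_append ha (q.fst_mem_support_of_mem_edges hq),
    hpath.eq_of_mem_support_of_append hb (q.snd_mem_support_of_mem_edges hq)]

lemma IsChordless.cons {p : G.Walk v w} (hp : p.IsChordless) (h : G.Adj u v)
    (hu : ∀ t ∈ p.support, G.Adj u t → t = v) : (cons h p).IsChordless := by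
  rw [isChordless_iff_forall_mem_edges] at hp ⊢
  intro a b ha hb hab
  rw [support_cons, List.mem_cons] at ha hb
  rw [edges_cons, List.mem_cons]
  rcases ha with rfl | ha <;> rcases hb with rfl | hb
  · exact absurd rfl hab.ne
  · exact Or.inl (by rw [hu b hb hab])
  · exact Or.inl (by rw [hu a ha hab.symm, Sym2.eq_swap])
  · exact Or.inr (hp ha hb hab)

lemma exists_isPath_isChordless_cons {p : G.Walk v w} (hp : p.IsPath) (hpc : p.IsChordless)
    (h : G.Adj u v) :
    ∃ q : G.Walk u w, q.IsPath ∧ q.IsChordless ∧ q.support ⊆ u :: p.support := by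
  obtain ⟨d, hd, p₁, p₂, hsplit, hfirst⟩ :=
    p.reverse.exists_eq_append_first (P := fun t => t = u ∨ G.Adj u t) (Or.inr h)
  have hsplit_path : (p₁.append p₂).IsPath := hsplit ▸ hp.reverse
  have hp₁ : p₁.reverse.IsPath := hsplit_path.of_append_left.reverse
  have hp₁c : p₁.reverse.IsChordless :=
    ((hsplit ▸ hpc.reverse).of_append_left hsplit_path).reverse
  have hsub : p₁.reverse.support ⊆ p.support := by
    intro t ht
    rw [support_reverse, List.mem_reverse] at ht
    have := p₁.support_subset_support_append_left p₂ ht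
    rwa [← hsplit, support_reverse, List.mem_reverse] at this
  have hnbr : ∀ t ∈ p₁.reverse.support, t = u ∨ G.Adj u t → t = d := fun t ht hPt =>
    hfirst t (by simpa using ht) hPt
  rcases hd with rfl | hud
  · exact ⟨p₁.reverse, hp₁, hp₁c, List.Subset.trans hsub (List.subset_cons_self _ _)⟩
  · refine ⟨cons hud p₁.reverse, hp₁.cons fun hu => hud.ne (hnbr u hu (Or.inl rfl)),
      hp₁c.cons hud fun t ht hut => hnbr t ht (Or.inr hut), ?_⟩
    rw [support_cons]
    exact List.cons_subset_cons _ hsub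

theorem exists_isPath_isChordless_support_subset (p : G.Walk u v) :
    ∃ q : G.Walk u v, q.IsPath ∧ q.IsChordless ∧ q.support ⊆ p.support := by
  induction p with
  | nil => exact ⟨nil, IsPath.nil, isChordless_nil, List.Subset.refl _⟩
  | cons h p ih =>
    obtain ⟨q, hq, hqc, hsub⟩ := ih
    obtain ⟨r, hr, hrc, hrsub⟩ := exists_isPath_isChordless_cons hq hqc h
    refine ⟨r, hr, hrc, List.Subset.trans hrsub ?_⟩
    rw [support_cons]
    exact List.cons_subset_cons _ hsub

lemma IsChordless.support_subset_of_adj_of_adj {p : G.Walk a b} (hpc : p.IsChordless)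
    (hp : p.IsPath) (hv : v ∈ p.support) (hav : G.Adj a v) (hvb : G.Adj v b) (hab : a ≠ b) :
    p.support ⊆ [a, v, b] := by
  have hsnd : v = p.snd := hp.eq_snd_of_mem_edges (hpc.mem_edges p.start_mem_support hv hav)
  have hpen : v = p.penultimate :=
    hp.eq_penultimate_of_mem_edges (hpc.mem_edges p.end_mem_support hv hvb.symm)
  have hlen : p.length ≠ 0 := fun h => hab (eq_of_length_eq_zero h)
  have hlen2 : 1 = p.length - 1 :=
    hp.getVert_injOn (by simp; omega) (by simp) (hsnd.symm.trans hpen)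
  intro t ht
  obtain ⟨n, rfl, hn⟩ := mem_support_iff_exists_getVert.mp ht
  have hn2 : n ≤ 2 := by omega
  interval_cases n
  · simp [getVert_zero]
  · simp [← hsnd]
  · simp [show 2 = p.length by omega, getVert_length]

lemma IsPath.exists_adj_adj_of_mem_support {p : G.Walk a b} (hp : p.IsPath)
    (hc : c ∈ p.support) (hac : a ≠ c) (hbc : b ≠ c) :
    ∃ (a' b' : V) (p₁ : G.Walk a a') (p₂ : G.Walk b' b),
      G.Adj a' c ∧ G.Adj c b' ∧ c ∉ p₁.support ∧ c ∉ p₂.support := by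
  classical
  obtain ⟨a', ha', q₁, hq₁⟩ := exists_eq_cons_of_ne hac.symm (p.takeUntil c hc).reverse
  obtain ⟨b', hb', q₂, hq₂⟩ := exists_eq_cons_of_ne hbc.symm (p.dropUntil c hc)
  have h₁ : (cons ha' q₁).IsPath := hq₁ ▸ (hp.takeUntil hc).reverse
  have h₂ : (cons hb' q₂).IsPath := hq₂ ▸ hp.dropUntil hc
  rw [cons_isPath_iff] at h₁ h₂
  exact ⟨a', b', q₁.reverse, q₂, ha'.symm, hb', by simpa using h₁.2, h₂.2⟩

lemma eq_of_mem_support_append_dropUntil [DecidableEq V] {P Q : G.Walk c a} (hP : P.IsPath)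
    (hPQ : ∀ t ∈ P.support, t ∈ Q.support → t = c ∨ t = a)
    (R : G.Walk b w) (hw : w ∈ P.support) (hc : c ∉ R.support)
    (hR : ∀ t ∈ R.support, t ∈ P.support ∨ t ∈ Q.support → t = w) :
    ∀ t ∈ (R.append (P.dropUntil w hw)).support, t ∈ Q.support → t = a := by
  have hwc : w ≠ c := fun h => hc (h ▸ R.end_mem_support)
  intro t ht htQ
  rcases (mem_support_append_iff _ _).mp ht with htR | htP
  · obtain rfl := hR t htR (Or.inr htQ)
    exact (hPQ t hw htQ).resolve_left hwc
  · refine (hPQ t (P.support_dropUntil_subset_support hw htP) htQ).resolve_left ?_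
    rintro rfl
    have hpath : ((P.takeUntil w hw).append (P.dropUntil w hw)).IsPath := by rwa [take_spec]
    exact hwc (hpath.eq_of_mem_support_of_append (start_mem_support _) htP).symm

theorem exists_walks_meeting_only_at_end {P Q : G.Walk c a} (hP : P.IsPath) (hQ : Q.IsPath)
    (hPQ : ∀ t ∈ P.support, t ∈ Q.support → t = c ∨ t = a) (R : G.Walk b a)
    (hc : c ∉ R.support) :
    ∃ (S : G.Walk b a) (T : G.Walk c a), ∀ t ∈ S.support, t ∈ T.support → t = a := by
  classical
  obtain ⟨w, hw, R₁, R₂, rfl, hfirst⟩ :=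
    R.exists_eq_append_first (P := fun t => t ∈ P.support ∨ t ∈ Q.support)
      (Or.inl P.end_mem_support)
  have hc₁ : c ∉ R₁.support := fun h => hc (R₁.support_subset_support_append_left R₂ h)
  rcases hw with hwP | hwQ
  · exact ⟨_, Q, eq_of_mem_support_append_dropUntil hP hPQ R₁ hwP hc₁ hfirst⟩
  · exact ⟨_, P, eq_of_mem_support_append_dropUntil hQ (fun t htQ htP => hPQ t htP htQ)
      R₁ hwQ hc₁ fun t ht htPQ => hfirst t ht htPQ.symm⟩

end SimpleGraph.Walk

namespace SimpleGraph

open Walk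

variable {G : SimpleGraph V}

def NoCutVertex (G : SimpleGraph V) : Prop :=
  ∀ c a b : V, a ≠ c → b ≠ c → ∃ p : G.Walk a b, c ∉ p.support

theorem NoCutVertex.exists_internally_disjoint_paths {u v : V} (hG : G.NoCutVertex)
    (p : G.Walk u v) (huv : u ≠ v) : ∃ P Q : G.Walk u v, P.IsPath ∧ Q.IsPath ∧
      ∀ t ∈ P.support, t ∈ Q.support → t = u ∨ t = v := by
  classical
  induction p with
  | nil => exact absurd rfl huv
  | @cons u w v h p ih =>
    by_cases hwv : w = v
    · subst hwv
      exact ⟨h.toWalk, h.toWalk, h.isPath_toWalk, h.isPath_toWalk, by simp⟩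
    obtain ⟨P, Q, hP, hQ, hPQ⟩ := ih hwv
    -- The fan step attaches `u` to the disjoint pair for `p`, using a walk that avoids `w`.
    obtain ⟨R, hR⟩ := hG w u v h.ne (Ne.symm hwv)
    obtain ⟨S, T, hST⟩ := exists_walks_meeting_only_at_end hP hQ hPQ R hR
    refine ⟨S.bypass, (cons h T).bypass, S.bypass_isPath, (cons h T).bypass_isPath,
      fun t hS hT => ?_⟩
    rcases List.mem_cons.mp (support_bypass_subset_support _ hT) with rfl | hT
    · exact Or.inl rfl
    · exact Or.inr (hST t (support_bypass_subset_support _ hS) hT)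

end SimpleGraph

open Walk

lemma isInducedPath_iff {G : SimpleGraph V} {u v : V} {p : G.Walk u v} :
    IsInducedPath G p ↔ p.IsPath ∧ p.IsChordless := by
  simp only [IsInducedPath, isChordless_iff_forall_mem_edges, adj_toSubgraph_iff_mem_edges]

lemma mem_monoInterval_self_s16 {G : SimpleGraph V} {c t : V} (h : t ∈ monoInterval G c c) :
    t = c := by
  obtain ⟨p, ⟨hp, -⟩, ht⟩ := h
  simpa [(isPath_iff_nil.mp hp).eq_nil] using ht

lemma nonempty_iso_pathGraph_three {G : SimpleGraph V} {a v b : V} (hav : G.Adj a v)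
    (hvb : G.Adj v b) (hab : a ≠ b) (hnab : ¬ G.Adj a b)
    (hV : ∀ t, t = a ∨ t = v ∨ t = b) : Nonempty (G ≃g pathGraph 3) := by
  let f : Fin 3 → V := ![a, v, b]
  have hf : Function.Bijective f := by
    refine ⟨fun i j hij => ?_, fun t => ?_⟩
    · fin_cases i <;> fin_cases j <;>
        simp_all [f, hav.ne, hvb.ne, hav.ne.symm, hvb.ne.symm, hab.symm]
    · rcases hV t with rfl | rfl | rfl
      exacts [⟨0, rfl⟩, ⟨1, rfl⟩, ⟨2, rfl⟩]
  have hnba : ¬ G.Adj b a := fun hba => hnab hba.symm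
  refine ⟨(RelIso.mk (Equiv.ofBijective f hf) fun {i j} => ?_).symm⟩
  fin_cases i <;> fin_cases j <;>
    simp [f, pathGraph_adj, hav, hvb, hnab, hnba, hav.symm, hvb.symm]

namespace Strongly2Monophonic

variable {G : SimpleGraph V}

lemma eq_or_eq_of_not_reachable (h : Strongly2Monophonic G) {a b : V}
    (hab : ¬ G.Reachable a b) (t : V) : t = a ∨ t = b := by
  obtain ⟨c, hc, d, hd, ht⟩ :=
    h a b (fun h' => hab (h' ▸ .rfl)) (fun h' => hab h'.reachable) t
  simp only [Set.mem_insert_iff, Set.mem_singleton_iff] at hc hd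
  rcases hc with rfl | rfl <;> rcases hd with rfl | rfl
  · exact Or.inl (mem_monoInterval_self_s16 ht)
  · exact absurd ht.choose.reachable hab
  · exact absurd ht.choose.reachable.symm hab
  · exact Or.inr (mem_monoInterval_self_s16 ht)

lemma preconnected (h : Strongly2Monophonic G) {x y z : V} (hxy : x ≠ y) (hxz : x ≠ z)
    (hyz : y ≠ z) : G.Preconnected := by
  intro a b
  by_contra hab
  have := h.eq_or_eq_of_not_reachable hab
  rcases this x with rfl | rfl <;> rcases this y with rfl | rfl <;>
    rcases this z with rfl | rfl <;> contradiction

lemma exists_isPath_isChordless_mem_support (h : Strongly2Monophonic G) (hG : G.Preconnected)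
    {a b : V} (hab : a ≠ b) (hnab : ¬ G.Adj a b) (t : V) :
    ∃ p : G.Walk a b, p.IsPath ∧ p.IsChordless ∧ t ∈ p.support := by
  obtain ⟨c, hc, d, hd, ht⟩ := h a b hab hnab t
  simp only [Set.mem_insert_iff, Set.mem_singleton_iff] at hc hd
  obtain ⟨q, hq, hqc, -⟩ := (hG a b).some.exists_isPath_isChordless_support_subset
  rcases hc with rfl | rfl <;> rcases hd with rfl | rfl
  · exact ⟨q, hq, hqc, mem_monoInterval_self_s16 ht ▸ q.start_mem_support⟩
  · obtain ⟨p, hp, ht⟩ := ht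
    obtain ⟨hp, hpc⟩ := isInducedPath_iff.mp hp
    exact ⟨p, hp, hpc, ht⟩
  · obtain ⟨p, hp, ht⟩ := ht
    obtain ⟨hp, hpc⟩ := isInducedPath_iff.mp hp
    exact ⟨p.reverse, hp.reverse, hpc.reverse, by simpa using ht⟩
  · exact ⟨q, hq, hqc, mem_monoInterval_self_s16 ht ▸ q.end_mem_support⟩

lemma noCutVertex (h : Strongly2Monophonic G) (hG : G.Preconnected)
    (hP3 : ¬ Nonempty (G ≃g pathGraph 3)) : G.NoCutVertex := by
  intro c a b hac hbc
  by_contra! hsep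
  obtain ⟨π, hπ⟩ := (hG a b).exists_isPath
  obtain ⟨a', b', p₁, p₂, ha', hb', hp₁, hp₂⟩ :=
    hπ.exists_adj_adj_of_mem_support (hsep π) hac hbc
  have hsep' : ∀ W : G.Walk a' b', c ∈ W.support := fun W => by
    by_contra hW
    simpa [mem_support_append_iff, hp₁, hp₂, hW] using hsep ((p₁.append W).append p₂)
  have hne : a' ≠ b' := by
    rintro rfl
    simpa [ha'.ne'] using hsep' nil
  have hnadj : ¬ G.Adj a' b' := fun hadj => by
    simpa [ha'.ne', hb'.ne] using hsep' hadj.toWalk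
  refine hP3 (nonempty_iso_pathGraph_three ha' hb' hne hnadj fun t => ?_)
  obtain ⟨W, hW, hWc, ht⟩ := h.exists_isPath_isChordless_mem_support hG hne hnadj t
  simpa using hWc.support_subset_of_adj_of_adj hW (hsep' W) ha' hb' hne ht

end Strongly2Monophonic

theorem stmt16 {V : Type*} (G : SimpleGraph V) (h : Strongly2Monophonic G)
    (hP3 : ¬ Nonempty (G ≃g pathGraph 3))
    (x y z : V) (hxy : x ≠ y) (hxz : x ≠ z) (hyz : y ≠ z) :
    ∃ (P : G.Walk x y) (Q : G.Walk y z),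
      IsInducedPath G P ∧ IsInducedPath G Q ∧
      ∀ w : V, w ∈ P.support → w ∈ Q.support → w = y := by
  have hconn := h.preconnected hxy hxz hyz
  have hG := h.noCutVertex hconn hP3
  obtain ⟨P₁, P₂, hP₁, hP₂, hdisj⟩ :=
    hG.exists_internally_disjoint_paths (hconn x y).some hxy
  obtain ⟨R, hR⟩ := hG x z y hxz.symm hxy.symm
  obtain ⟨S, T, hST⟩ := exists_walks_meeting_only_at_end hP₁ hP₂ hdisj R hR
  obtain ⟨P, hP, hPc, hPT⟩ := T.exists_isPath_isChordless_support_subset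
  obtain ⟨Q, hQ, hQc, hQS⟩ := S.exists_isPath_isChordless_support_subset
  refine ⟨P, Q.reverse, isInducedPath_iff.mpr ⟨hP, hPc⟩,
    isInducedPath_iff.mpr ⟨hQ.reverse, hQc.reverse⟩, fun t htP htQ => ?_⟩
  rw [support_reverse, List.mem_reverse] at htQ
  exact hST t (hQS htQ) (hPT htP)
end

section
/- For every n ≥ 2r ≥ 4 with r ≥ 2, the Johnson graph J(n,r) is strongly 2-monophonic: for every pair of vertices x,y with |x ∩ y| ≤ r − 2, every vertex of J(n,r) lies on an induced x,y-path. -/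
open SimpleGraph

variable {V : Type*}

/-!
Every vertex `w` lies on the walk that goes from `x` to `w` and then from `w` to `y` along
geodesics, exchanging one element per step: the first half trades `w \ x = P ∪ S` for
`x \ w = P' ∪ T` in the orders `P, S` and `P', T`, the second trades `w \ y = Q ∪ S` for
`y \ w = Q' ∪ T` in the orders `Q, S` and `Q', T`, but with `S` and `T` run backwards
(`S = w \ (x ∪ y)`, `T = (x ∩ y) \ w`). Geodesics are induced. Two vertices at distances
`a`, `b` from `w` on different halves share `r - a - b` elements plus the common removed and
the common added ones, and since `S` and `T` are traversed in opposite directions these can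
only appear late, which together with `|P| + |Q| + |S| - |T| = r - |x ∩ y| ≥ 2` keeps the
intersection at most `r - 2`.
-/

namespace SimpleGraph

variable {G : SimpleGraph V}

def walkOfFn (G : SimpleGraph V) (f : ℕ → V) :
    (m : ℕ) → (∀ i < m, G.Adj (f i) (f (i + 1))) → G.Walk (f 0) (f m)
  | 0, _ => .nil
  | m + 1, h => (walkOfFn G f m fun i hi => h i (by omega)).concat (h m (by omega))

lemma support_walkOfFn (f : ℕ → V) (m : ℕ) (h : ∀ i < m, G.Adj (f i) (f (i + 1))) :
    (walkOfFn G f m h).support = (List.range (m + 1)).map f := by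
  induction m with
  | zero => rfl
  | succ m ih => rw [walkOfFn, Walk.support_concat, ih]; simp [List.range_succ]

lemma edges_walkOfFn (f : ℕ → V) (m : ℕ) (h : ∀ i < m, G.Adj (f i) (f (i + 1))) :
    (walkOfFn G f m h).edges = (List.range m).map fun i => s(f i, f (i + 1)) := by
  induction m with
  | zero => rfl
  | succ m ih => rw [walkOfFn, Walk.edges_concat, ih, List.range_succ]; simp

structure IsInducedSeq (G : SimpleGraph V) (f : ℕ → V) (m : ℕ) : Prop where
  adj : ∀ i < m, G.Adj (f i) (f (i + 1))
  not_adj_and_ne : ∀ i j, i + 2 ≤ j → j ≤ m → ¬ G.Adj (f i) (f j) ∧ f i ≠ f j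

namespace IsInducedSeq

variable {f g h : ℕ → V} {m a b : ℕ}

lemma ne_of_lt (hf : G.IsInducedSeq f m) {i j : ℕ} (hij : i < j) (hj : j ≤ m) :
    f i ≠ f j := by
  obtain rfl | hij := (Nat.succ_le_of_lt hij).eq_or_lt
  · exact (hf.adj i hj).ne
  · exact (hf.not_adj_and_ne i j hij hj).2

lemma isInducedPath (hf : G.IsInducedSeq f m) : IsInducedPath G (walkOfFn G f m hf.adj) := by
  refine ⟨Walk.IsPath.mk' ?_, ?_⟩
  · rw [support_walkOfFn, List.nodup_map_iff_inj_on List.nodup_range]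
    intro i hi j hj hfij
    simp only [List.mem_range] at hi hj
    by_contra hne
    rcases Nat.lt_or_gt_of_ne hne with hij | hji
    · exact hf.ne_of_lt hij (by omega) hfij
    · exact hf.ne_of_lt hji (by omega) hfij.symm
  · intro u v hu hv huv
    rw [support_walkOfFn] at hu hv
    simp only [List.mem_map, List.mem_range] at hu hv
    obtain ⟨i, hi, rfl⟩ := hu
    obtain ⟨j, hj, rfl⟩ := hv
    wlog hij : i < j generalizing i j
    · have hne : i ≠ j := fun h => huv.ne (congrArg f h)
      exact (this j hj i hi huv.symm (by omega)).symm
    obtain rfl | hij := (Nat.succ_le_of_lt hij).eq_or_lt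
    · rw [← Subgraph.mem_edgeSet, Walk.mem_edges_toSubgraph, edges_walkOfFn]
      exact List.mem_map_of_mem (List.mem_range.2 (by omega))
    · exact absurd huv (hf.not_adj_and_ne i j hij (by omega)).1

lemma mem_monoInterval (hf : G.IsInducedSeq f m) {k : ℕ} (hk : k ≤ m) :
    f k ∈ monoInterval G (f 0) (f m) :=
  ⟨walkOfFn G f m hf.adj, hf.isInducedPath, by
    rw [support_walkOfFn]; exact List.mem_map_of_mem (List.mem_range.2 (by omega))⟩

lemma join (hg : G.IsInducedSeq g a) (hh : G.IsInducedSeq h b) (h0 : g 0 = h 0)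
    (hcross : ∀ i j, 0 < i → i ≤ a → 0 < j → j ≤ b →
      ¬ G.Adj (g i) (h j) ∧ g i ≠ h j) :
    G.IsInducedSeq (fun k => if k ≤ a then g (a - k) else h (k - a)) (a + b) := by
  set F : ℕ → V := fun k => if k ≤ a then g (a - k) else h (k - a)
  have hFg : ∀ k ≤ a, F k = g (a - k) := fun k hk => if_pos hk
  have hFh : ∀ k, a ≤ k → F k = h (k - a) := by
    intro k hk
    obtain rfl | hk := hk.eq_or_lt
    · simp [F, h0]
    · exact if_neg (by omega)
  constructor
  · intro i hi
    by_cases hia : i < a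
    · rw [hFg i (by omega), hFg (i + 1) hia, show a - i = a - (i + 1) + 1 by omega]
      exact (hg.adj _ (by omega)).symm
    · rw [hFh i (by omega), hFh (i + 1) (by omega), show i + 1 - a = i - a + 1 by omega]
      exact hh.adj _ (by omega)
  · intro i j hij hj
    by_cases hja : j ≤ a
    · rw [hFg i (by omega), hFg j hja]
      have := hg.not_adj_and_ne (a - j) (a - i) (by omega) (by omega)
      exact ⟨fun hadj => this.1 hadj.symm, fun he => this.2 he.symm⟩
    by_cases hai : a ≤ i
    · rw [hFh i hai, hFh j (by omega)]
      exact hh.not_adj_and_ne _ _ (by omega) (by omega)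
    · rw [hFg i (by omega), hFh j (by omega)]
      exact hcross _ _ (by omega) (by omega) (by omega) (by omega)

lemma mem_monoInterval_of_join (hg : G.IsInducedSeq g a) (hh : G.IsInducedSeq h b)
    (h0 : g 0 = h 0) (hcross : ∀ i j, 0 < i → i ≤ a → 0 < j → j ≤ b →
      ¬ G.Adj (g i) (h j) ∧ g i ≠ h j) :
    g 0 ∈ monoInterval G (g a) (h b) := by
  have hk := (hg.join hh h0 hcross).mem_monoInterval (Nat.le_add_right a b)
  obtain rfl | hb := b.eq_zero_or_pos
  · simpa [h0] using hk
  · simpa [h0, hb.ne'] using hk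

end IsInducedSeq

end SimpleGraph

section SwapSet

variable {α : Type*} [DecidableEq α]

lemma Finset.card_sdiff_union_inter_sdiff_union {w A A' B B' : Finset α} (hA : A ⊆ w)
    (hA' : A' ⊆ w) (hB : Disjoint B w) (hB' : Disjoint B' w) :
    ((w \ A ∪ B) ∩ (w \ A' ∪ B')).card + A.card + A'.card =
      w.card + (A ∩ A').card + (B ∩ B').card := by
  have heq : (w \ A ∪ B) ∩ (w \ A' ∪ B') = w \ (A ∪ A') ∪ B ∩ B' := by
    ext z
    have := fun h : z ∈ B => Finset.disjoint_left.1 hB h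
    have := fun h : z ∈ B' => Finset.disjoint_left.1 hB' h
    simp only [Finset.mem_inter, Finset.mem_union, Finset.mem_sdiff]
    tauto
  have hdisj : Disjoint (w \ (A ∪ A')) (B ∩ B') :=
    (hB.mono_left Finset.inter_subset_left).symm.mono_left Finset.sdiff_subset
  rw [heq, Finset.card_union_of_disjoint hdisj,
    Finset.card_sdiff_of_subset (Finset.union_subset hA hA')]
  have := Finset.card_union_add_card_inter A A'
  have := Finset.card_le_card (Finset.union_subset hA hA')
  omega

lemma List.card_toFinset_take {l : List α} (hl : l.Nodup) (k : ℕ) :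
    (l.take k).toFinset.card = min k l.length := by
  rw [List.toFinset_card_of_nodup (hl.sublist (List.take_sublist _ _)), List.length_take]

lemma List.toFinset_take_subset_take (l : List α) {k j : ℕ} (h : k ≤ j) :
    (l.take k).toFinset ⊆ (l.take j).toFinset := fun _ hz =>
  List.mem_toFinset.2 (List.take_subset_take_left _ h (List.mem_toFinset.1 hz))

lemma List.card_toFinset_take_inter_take_reverse_le {l : List α} (hl : l.Nodup) (a b : ℕ) :
    ((l.take a).toFinset ∩ (l.reverse.take b).toFinset).card ≤ a + b - l.length := by
  set c := l.length - b
  have hsub : (l.take a).toFinset ∩ (l.reverse.take b).toFinset ⊆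
      ((l.take a).drop c).toFinset := by
    intro z hz
    simp only [List.take_reverse, Finset.mem_inter, List.mem_toFinset, List.mem_reverse] at hz
    obtain ⟨hza, hzc⟩ := hz
    rw [← List.take_append_drop c (l.take a), List.mem_append, List.take_take] at hza
    rw [List.mem_toFinset]
    refine hza.resolve_left fun hz => List.disjoint_take_drop hl (min_le_left c a) hz hzc
  calc _ ≤ ((l.take a).drop c).toFinset.card := Finset.card_le_card hsub
    _ ≤ ((l.take a).drop c).length := List.toFinset_card_le _
    _ ≤ a + b - l.length := by simp only [List.length_drop, List.length_take]; omega

/-- Prefixes of `P ++ S` and of `Q ++ reverse S` can only meet in `S`, where one grows from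
the front and the other from the back. -/
lemma card_toFinset_take_inter_take_le {P Q S : Finset α} (hPQ : Disjoint P Q)
    (hPS : Disjoint P S) (hQS : Disjoint Q S) (a b : ℕ) :
    (((P.toList ++ S.toList).take a).toFinset ∩
        ((Q.toList ++ S.toList.reverse).take b).toFinset).card ≤
      (a - P.card) + (b - Q.card) - S.card := by
  have hsub : ((P.toList ++ S.toList).take a).toFinset ∩
        ((Q.toList ++ S.toList.reverse).take b).toFinset ⊆
      (S.toList.take (a - P.card)).toFinset ∩ (S.toList.reverse.take (b - Q.card)).toFinset := by
    intro z
    simp only [List.take_append, Finset.length_toList, Finset.mem_inter, List.mem_toFinset,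
      List.mem_append]
    have hP := fun h : z ∈ P.toList.take a => Finset.mem_toList.1 (List.mem_of_mem_take h)
    have hQ := fun h : z ∈ Q.toList.take b => Finset.mem_toList.1 (List.mem_of_mem_take h)
    have hS := fun h : z ∈ S.toList.take (a - P.card) =>
      Finset.mem_toList.1 (List.mem_of_mem_take h)
    have hS' := fun h : z ∈ S.toList.reverse.take (b - Q.card) =>
      Finset.mem_toList.1 (List.mem_reverse.1 (List.mem_of_mem_take h))
    have := fun h : z ∈ P => Finset.disjoint_left.1 hPQ h
    have := fun h : z ∈ P => Finset.disjoint_left.1 hPS h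
    have := fun h : z ∈ Q => Finset.disjoint_left.1 hQS h
    tauto
  calc _ ≤ _ := Finset.card_le_card hsub
    _ ≤ _ := S.length_toList ▸ List.card_toFinset_take_inter_take_reverse_le S.nodup_toList _ _

def swapSet (w : Finset α) (out inn : List α) (k : ℕ) : Finset α :=
  w \ (out.take k).toFinset ∪ (inn.take k).toFinset

/-- `out` and `inn` enumerate `w \ x` and `x \ w`, so that `swapSet w out inn` runs from `w`
to `x`, one exchange at a time. -/
structure IsSwapOrder (w x : Finset α) (out inn : List α) : Prop where
  nodup_out : out.Nodup
  nodup_inn : inn.Nodup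
  toFinset_out : out.toFinset = w \ x
  toFinset_inn : inn.toFinset = x \ w

namespace IsSwapOrder

variable {w x y : Finset α} {out inn out' inn' : List α}

lemma append {P P' : Finset α} {s t : List α} (hs : s.Nodup) (ht : t.Nodup)
    (hPs : Disjoint P s.toFinset) (hP't : Disjoint P' t.toFinset)
    (hout : P ∪ s.toFinset = w \ x) (hinn : P' ∪ t.toFinset = x \ w) :
    IsSwapOrder w x (P.toList ++ s) (P'.toList ++ t) where
  nodup_out := P.nodup_toList.append hs
    (List.disjoint_toFinset_iff_disjoint.1 (by rwa [Finset.toList_toFinset]))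
  nodup_inn := P'.nodup_toList.append ht
    (List.disjoint_toFinset_iff_disjoint.1 (by rwa [Finset.toList_toFinset]))
  toFinset_out := by rw [List.toFinset_append, Finset.toList_toFinset, hout]
  toFinset_inn := by rw [List.toFinset_append, Finset.toList_toFinset, hinn]

lemma take_subset (h : IsSwapOrder w x out inn) (k : ℕ) : (out.take k).toFinset ⊆ w := by
  intro z hz
  have : z ∈ out.toFinset := List.mem_toFinset.2 (List.mem_of_mem_take (List.mem_toFinset.1 hz))
  rw [h.toFinset_out] at this
  exact Finset.mem_sdiff.1 this |>.1

lemma disjoint_take (h : IsSwapOrder w x out inn) (k : ℕ) : Disjoint (inn.take k).toFinset w := by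
  refine Finset.disjoint_left.2 fun z hz => ?_
  have : z ∈ inn.toFinset := List.mem_toFinset.2 (List.mem_of_mem_take (List.mem_toFinset.1 hz))
  rw [h.toFinset_inn] at this
  exact Finset.mem_sdiff.1 this |>.2

lemma length_inn (h : IsSwapOrder w x out inn) (hwx : w.card = x.card) :
    inn.length = out.length := by
  rw [← List.toFinset_card_of_nodup h.nodup_inn, ← List.toFinset_card_of_nodup h.nodup_out,
    h.toFinset_inn, h.toFinset_out, Finset.card_sdiff_comm hwx]

lemma card_swapSet_inter_swapSet (h : IsSwapOrder w x out inn)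
    (h' : IsSwapOrder w y out' inn') (a b : ℕ) :
    (swapSet w out inn a ∩ swapSet w out' inn' b).card + (out.take a).toFinset.card +
        (out'.take b).toFinset.card =
      w.card + ((out.take a).toFinset ∩ (out'.take b).toFinset).card +
        ((inn.take a).toFinset ∩ (inn'.take b).toFinset).card :=
  Finset.card_sdiff_union_inter_sdiff_union (h.take_subset a) (h'.take_subset b)
    (h.disjoint_take a) (h'.disjoint_take b)

lemma card_swapSet (h : IsSwapOrder w x out inn) (hwx : w.card = x.card) (k : ℕ) :
    (swapSet w out inn k).card = w.card := by
  have key := h.card_swapSet_inter_swapSet h k k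
  simp only [Finset.inter_self, List.card_toFinset_take h.nodup_out,
    List.card_toFinset_take h.nodup_inn, h.length_inn hwx] at key
  omega

lemma card_swapSet_inter (h : IsSwapOrder w x out inn) (hwx : w.card = x.card) {k l : ℕ}
    (hkl : k ≤ l) (hl : l ≤ out.length) :
    (swapSet w out inn k ∩ swapSet w out inn l).card + l = w.card + k := by
  have key := h.card_swapSet_inter_swapSet h k l
  rw [Finset.inter_eq_left.2 (out.toFinset_take_subset_take hkl),
    Finset.inter_eq_left.2 (inn.toFinset_take_subset_take hkl)] at key
  simp only [List.card_toFinset_take h.nodup_out, List.card_toFinset_take h.nodup_inn,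
    h.length_inn hwx] at key
  omega

lemma swapSet_length (h : IsSwapOrder w x out inn) (hwx : w.card = x.card) :
    swapSet w out inn out.length = x := by
  rw [swapSet, List.take_length, ← h.length_inn hwx, List.take_length, h.toFinset_out,
    h.toFinset_inn, Finset.sdiff_sdiff_self_left, Finset.inter_comm, Finset.union_comm,
    Finset.sdiff_union_inter]

end IsSwapOrder

lemma card_swapSet_inter_swapSet_add_two_le {w x y P Q S P' Q' T : Finset α}
    (hx : IsSwapOrder w x (P.toList ++ S.toList) (P'.toList ++ T.toList))
    (hy : IsSwapOrder w y (Q.toList ++ S.toList.reverse) (Q'.toList ++ T.toList.reverse))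
    (hwx : w.card = x.card) (hwy : w.card = y.card)
    (hPQ : Disjoint P Q) (hPS : Disjoint P S) (hQS : Disjoint Q S)
    (hP'Q' : Disjoint P' Q') (hP'T : Disjoint P' T) (hQ'T : Disjoint Q' T)
    (hcard : T.card + 2 ≤ P.card + Q.card + S.card) {a b : ℕ} (ha : 0 < a)
    (ha' : a ≤ P.card + S.card) (hb : 0 < b) (hb' : b ≤ Q.card + S.card) :
    (swapSet w (P.toList ++ S.toList) (P'.toList ++ T.toList) a ∩
        swapSet w (Q.toList ++ S.toList.reverse) (Q'.toList ++ T.toList.reverse) b).card + 2 ≤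
      w.card := by
  have key := hx.card_swapSet_inter_swapSet hy a b
  have hout := card_toFinset_take_inter_take_le hPQ hPS hQS a b
  have hinn := card_toFinset_take_inter_take_le hP'Q' hP'T hQ'T a b
  have hlx := hx.length_inn hwx
  have hly := hy.length_inn hwy
  simp only [List.card_toFinset_take hx.nodup_out, List.card_toFinset_take hy.nodup_out,
    List.length_append, Finset.length_toList, List.length_reverse] at key hlx hly
  omega

end SwapSet

section Johnson

variable {n r : ℕ}

lemma johnson_adj_of_card_inter {s t : {s : Finset (Fin n) // s.card = r}}
    (h : (s.1 ∩ t.1).card + 1 = r) : (johnson n r).Adj s t :=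
  ⟨fun hst => by rw [hst, Finset.inter_self, t.2] at h; omega, by omega⟩

lemma johnson_not_adj_and_ne_of_card_inter {s t : {s : Finset (Fin n) // s.card = r}}
    (h : (s.1 ∩ t.1).card + 2 ≤ r) : ¬ (johnson n r).Adj s t ∧ s ≠ t :=
  ⟨fun hst => by rw [hst.2] at h; omega,
    fun hst => by rw [hst, Finset.inter_self, t.2] at h; omega⟩

lemma johnson_card_inter_add_two_le {s t : {s : Finset (Fin n) // s.card = r}} (hst : s ≠ t)
    (hadj : ¬ (johnson n r).Adj s t) : (s.1 ∩ t.1).card + 2 ≤ r := by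
  have hle : (s.1 ∩ t.1).card ≤ r := (Finset.card_le_card Finset.inter_subset_left).trans_eq s.2
  have hne : (s.1 ∩ t.1).card ≠ r := fun h => by
    have hsub : s.1 ∩ t.1 = s.1 :=
      Finset.eq_of_subset_of_card_le Finset.inter_subset_left (by rw [h, s.2])
    exact hst (Subtype.ext (Finset.eq_of_subset_of_card_le (Finset.inter_eq_left.1 hsub)
      (by rw [s.2, t.2])))
  have hne' : (s.1 ∩ t.1).card ≠ r - 1 := fun h => hadj ⟨hst, h⟩
  omega

lemma johnson_isInducedSeq {f : ℕ → {s : Finset (Fin n) // s.card = r}} {m : ℕ}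
    (h : ∀ i j, i ≤ j → j ≤ m → ((f i).1 ∩ (f j).1).card + j = r + i) :
    (johnson n r).IsInducedSeq f m where
  adj i hi := johnson_adj_of_card_inter (by have := h i (i + 1) (by omega) hi; omega)
  not_adj_and_ne i j hij hj :=
    johnson_not_adj_and_ne_of_card_inter (by have := h i j (by omega) hj; omega)

lemma johnson_mem_monoInterval_of_isSwapOrder {x y w : {s : Finset (Fin n) // s.card = r}}
    {out inn out' inn' : List (Fin n)} (hx : IsSwapOrder w.1 x.1 out inn)
    (hy : IsSwapOrder w.1 y.1 out' inn')
    (hcross : ∀ a b, 0 < a → a ≤ out.length → 0 < b → b ≤ out'.length →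
      (swapSet w.1 out inn a ∩ swapSet w.1 out' inn' b).card + 2 ≤ r) :
    w ∈ monoInterval (johnson n r) x y := by
  have hwx : w.1.card = x.1.card := w.2.trans x.2.symm
  have hwy : w.1.card = y.1.card := w.2.trans y.2.symm
  let g (k : ℕ) : {s : Finset (Fin n) // s.card = r} :=
    ⟨swapSet w.1 out inn k, (hx.card_swapSet hwx k).trans w.2⟩
  let h (k : ℕ) : {s : Finset (Fin n) // s.card = r} :=
    ⟨swapSet w.1 out' inn' k, (hy.card_swapSet hwy k).trans w.2⟩
  have hg : (johnson n r).IsInducedSeq g out.length := johnson_isInducedSeq fun i j hij hj => by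
    simpa [g, w.2] using hx.card_swapSet_inter hwx hij hj
  have hh : (johnson n r).IsInducedSeq h out'.length := johnson_isInducedSeq fun i j hij hj => by
    simpa [h, w.2] using hy.card_swapSet_inter hwy hij hj
  have hmem := hg.mem_monoInterval_of_join hh rfl fun a b ha ha' hb hb' =>
    johnson_not_adj_and_ne_of_card_inter (hcross a b ha ha' hb hb')
  have hg0 : g 0 = w := Subtype.ext (by simp [g, swapSet])
  have hgx : g out.length = x := Subtype.ext (hx.swapSet_length hwx)
  have hhy : h out'.length = y := Subtype.ext (hy.swapSet_length hwy)
  rwa [hg0, hgx, hhy] at hmem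

open Finset in
theorem johnson_mem_monoInterval {x y : {s : Finset (Fin n) // s.card = r}}
    (hxy : (x.1 ∩ y.1).card + 2 ≤ r) (w : {s : Finset (Fin n) // s.card = r}) :
    w ∈ monoInterval (johnson n r) x y := by
  set P := (w.1 ∩ y.1) \ x.1 with hP
  set Q := (w.1 ∩ x.1) \ y.1 with hQ
  set S := (w.1 \ x.1) \ y.1 with hS
  set P' := (x.1 \ y.1) \ w.1 with hP'
  set Q' := (y.1 \ x.1) \ w.1 with hQ'
  set T := (x.1 ∩ y.1) \ w.1 with hT
  have hPQ : Disjoint P Q := disjoint_left.2 fun z => by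
    simp only [hP, hQ, mem_sdiff, mem_inter]; tauto
  have hPS : Disjoint P S := disjoint_left.2 fun z => by
    simp only [hP, hS, mem_sdiff, mem_inter]; tauto
  have hQS : Disjoint Q S := disjoint_left.2 fun z => by
    simp only [hQ, hS, mem_sdiff, mem_inter]; tauto
  have hP'Q' : Disjoint P' Q' := disjoint_left.2 fun z => by
    simp only [hP', hQ', mem_sdiff]; tauto
  have hP'T : Disjoint P' T := disjoint_left.2 fun z => by
    simp only [hP', hT, mem_sdiff, mem_inter]; tauto
  have hQ'T : Disjoint Q' T := disjoint_left.2 fun z => by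
    simp only [hQ', hT, mem_sdiff, mem_inter]; tauto
  have hwx' : P ∪ S = w.1 \ x.1 := by
    ext z; simp only [hP, hS, mem_union, mem_sdiff, mem_inter]; tauto
  have hxw' : P' ∪ T = x.1 \ w.1 := by
    ext z; simp only [hP', hT, mem_union, mem_sdiff, mem_inter]; tauto
  have hwy' : Q ∪ S = w.1 \ y.1 := by
    ext z; simp only [hQ, hS, mem_union, mem_sdiff, mem_inter]; tauto
  have hyw' : Q' ∪ T = y.1 \ w.1 := by
    ext z; simp only [hQ', hT, mem_union, mem_sdiff, mem_inter]; tauto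
  have hx : IsSwapOrder w.1 x.1 (P.toList ++ S.toList) (P'.toList ++ T.toList) :=
    .append S.nodup_toList T.nodup_toList (by simpa using hPS) (by simpa using hP'T)
      (by simpa using hwx') (by simpa using hxw')
  have hy : IsSwapOrder w.1 y.1 (Q.toList ++ S.toList.reverse) (Q'.toList ++ T.toList.reverse) :=
    .append (List.nodup_reverse.2 S.nodup_toList) (List.nodup_reverse.2 T.nodup_toList)
      (by simpa using hQS) (by simpa using hQ'T) (by simpa using hwy') (by simpa using hyw')
  have hcover : w.1 ⊆ P ∪ Q ∪ S ∪ (x.1 ∩ y.1) ∩ w.1 := fun z => by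
    simp only [hP, hQ, hS, mem_union, mem_sdiff, mem_inter]; tauto
  have hTcard : T.card + ((x.1 ∩ y.1) ∩ w.1).card = (x.1 ∩ y.1).card :=
    Finset.card_sdiff_add_card_inter _ _
  have hPQS : T.card + 2 ≤ P.card + Q.card + S.card := by
    have := (Finset.card_le_card hcover).trans (Finset.card_union_le _ _)
    have := Finset.card_union_le (P ∪ Q) S
    have := Finset.card_union_le P Q
    rw [w.2] at *
    omega
  have hwx : w.1.card = x.1.card := w.2.trans x.2.symm
  have hwy : w.1.card = y.1.card := w.2.trans y.2.symm
  refine johnson_mem_monoInterval_of_isSwapOrder hx hy fun a b ha ha' hb hb' => ?_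
  simp only [List.length_append, Finset.length_toList, List.length_reverse] at ha' hb'
  simpa [w.2] using card_swapSet_inter_swapSet_add_two_le hx hy hwx hwy hPQ hPS hQS hP'Q' hP'T
    hQ'T hPQS ha ha' hb hb'

end Johnson

theorem stmt19_general (n r : ℕ) (hr : 2 ≤ r) :
    Strongly2Monophonic (johnson n r) ∧
    ∀ x y : {s : Finset (Fin n) // s.card = r},
      (x.1 ∩ y.1).card ≤ r - 2 →
      IsMonophonicSet (johnson n r) {x, y} := by
  have hmono : ∀ x y : {s : Finset (Fin n) // s.card = r}, (x.1 ∩ y.1).card + 2 ≤ r →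
      IsMonophonicSet (johnson n r) {x, y} := fun x y hxy w =>
    ⟨x, Set.mem_insert _ _, y, Set.mem_insert_of_mem _ rfl, johnson_mem_monoInterval hxy w⟩
  exact ⟨fun x y hxy hadj => hmono x y (johnson_card_inter_add_two_le hxy hadj),
    fun x y hxy => hmono x y (by omega)⟩

theorem stmt19 (n r : ℕ) (hr : 2 ≤ r) (hn : 2 * r ≤ n) :
    Strongly2Monophonic (johnson n r) ∧
    ∀ x y : {s : Finset (Fin n) // s.card = r},
      (x.1 ∩ y.1).card ≤ r - 2 →
      IsMonophonicSet (johnson n r) {x, y} :=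
  stmt19_general n r hr
end
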